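/- arXiv:1502.02738 — 7 statements merged into one kernel-verified Lean document; each statement's English description precedes it below -/
import Mathlib

section
/- Let M_ρ be the smallest mode of the probability mass function f(x) = ρ^x ∏_{j=0}^∞ (1 - ρ^{x+1+j}) on ℕ, for ρ ∈ (0,1). Then M_ρ · ln ρ / ln(1-ρ) → 1 as ρ → 1⁻. -/
/-!
Since `f (x + 1) * (1 - ρ ^ (x + 1)) = ρ * f x`, the density increases exactly while
`ρ ^ (x + 1) > 1 - ρ`, so the smallest mode `m` is pinned down by `ρ ^ (m + 1) ≤ 1 - ρ < ρ ^ m`.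
Taking logarithms, `m * log ρ / log (1 - ρ)` lies in `[1 - log ρ / log (1 - ρ), 1]`, and
`log ρ / log (1 - ρ) → 0` as `ρ → 1⁻`.
-/

open Filter Set Real Topology

noncomputable def frogDensity (ρ : ℝ) (x : ℕ) : ℝ :=
  ρ ^ x * ∏' j : ℕ, (1 - ρ ^ (x + 1 + j))

section

variable {ρ : ℝ}

lemma one_sub_pow_pos (hρ0 : 0 ≤ ρ) (hρ1 : ρ < 1) {n : ℕ} (hn : n ≠ 0) : 0 < 1 - ρ ^ n :=
  sub_pos.2 (pow_lt_one₀ hρ0 hρ1 hn)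

lemma summable_log_one_sub_pow_add (hρ0 : 0 ≤ ρ) (hρ1 : ρ < 1) (k : ℕ) :
    Summable fun j : ℕ => log (1 - ρ ^ (k + j)) := by
  have hgeom : Summable fun j : ℕ => -ρ ^ (k + j) := by
    simpa [pow_add] using ((summable_geometric_of_lt_one hρ0 hρ1).mul_left (ρ ^ k)).neg
  simpa [sub_eq_add_neg] using Real.summable_log_one_add_of_summable hgeom

lemma multipliable_one_sub_pow_add (hρ0 : 0 ≤ ρ) (hρ1 : ρ < 1) (x : ℕ) :
    Multipliable fun j : ℕ => 1 - ρ ^ (x + 1 + j) :=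
  Real.multipliable_of_summable_log (fun _ => one_sub_pow_pos hρ0 hρ1 (by omega))
    (summable_log_one_sub_pow_add hρ0 hρ1 _)

lemma tprod_one_sub_pow_add_pos (hρ0 : 0 ≤ ρ) (hρ1 : ρ < 1) (x : ℕ) :
    0 < ∏' j : ℕ, (1 - ρ ^ (x + 1 + j)) := by
  rw [← Real.rexp_tsum_eq_tprod (fun _ => one_sub_pow_pos hρ0 hρ1 (by omega))
    (summable_log_one_sub_pow_add hρ0 hρ1 _)]
  exact exp_pos _

lemma frogDensity_pos (hρ0 : 0 < ρ) (hρ1 : ρ < 1) (x : ℕ) : 0 < frogDensity ρ x :=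
  mul_pos (pow_pos hρ0 x) (tprod_one_sub_pow_add_pos hρ0.le hρ1 x)

lemma frogDensity_succ_mul (hρ0 : 0 ≤ ρ) (hρ1 : ρ < 1) (x : ℕ) :
    frogDensity ρ (x + 1) * (1 - ρ ^ (x + 1)) = ρ * frogDensity ρ x := by
  have hshift : (fun j : ℕ => 1 - ρ ^ (x + 1 + (j + 1))) = fun j => 1 - ρ ^ (x + 1 + 1 + j) := by
    funext j
    rw [show x + 1 + (j + 1) = x + 1 + 1 + j by omega]
  have hsplit := tprod_eq_zero_mul' (f := fun j => 1 - ρ ^ (x + 1 + j))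
    (hshift ▸ multipliable_one_sub_pow_add hρ0 hρ1 (x + 1))
  rw [hshift] at hsplit
  rw [frogDensity, frogDensity, hsplit]
  ring

lemma frogDensity_succ_le_iff (hρ0 : 0 < ρ) (hρ1 : ρ < 1) (x : ℕ) :
    frogDensity ρ (x + 1) ≤ frogDensity ρ x ↔ ρ ^ (x + 1) ≤ 1 - ρ := by
  rw [← mul_le_mul_iff_left₀ (one_sub_pow_pos hρ0.le hρ1 x.add_one_ne_zero),
    frogDensity_succ_mul hρ0.le hρ1, mul_comm (frogDensity ρ x),
    mul_le_mul_iff_left₀ (frogDensity_pos hρ0 hρ1 x)]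
  constructor <;> intro <;> linarith

lemma pow_succ_le_one_sub_lt_pow_of_isLeast (hρ0 : 0 < ρ) (hρ1 : ρ < 1) {m : ℕ}
    (hm : IsLeast {x | ∀ n, frogDensity ρ n ≤ frogDensity ρ x} m) :
    ρ ^ (m + 1) ≤ 1 - ρ ∧ 1 - ρ < ρ ^ m := by
  obtain ⟨hmode, hleast⟩ := hm
  refine ⟨(frogDensity_succ_le_iff hρ0 hρ1 m).1 (hmode _), ?_⟩
  cases m with
  | zero => simpa using hρ0
  | succ k =>
    -- otherwise `f (k + 1) ≤ f k` and `k` would be a smaller mode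
    by_contra! h
    have : k + 1 ≤ k := hleast fun n => (hmode n).trans ((frogDensity_succ_le_iff hρ0 hρ1 k).2 h)
    omega

lemma mul_log_div_log_one_sub_mem_Icc (hρ0 : 0 < ρ) (hρ1 : ρ < 1) {m : ℕ}
    (hlo : ρ ^ (m + 1) ≤ 1 - ρ) (hhi : 1 - ρ < ρ ^ m) :
    m * log ρ / log (1 - ρ) ∈ Icc (1 - log ρ / log (1 - ρ)) 1 := by
  have hL : log (1 - ρ) < 0 := log_neg (by linarith) (by linarith)
  have hlo' := log_le_log (pow_pos hρ0 _) hlo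
  have hhi' := log_lt_log (by linarith) hhi
  rw [log_pow] at hlo' hhi'
  push_cast at hlo'
  constructor
  · rw [one_sub_div hL.ne, div_le_div_right_of_neg hL]
    linarith
  · rw [div_le_one_of_neg hL]
    linarith

end

lemma tendsto_log_div_log_one_sub_nhdsLT_one :
    Tendsto (fun ρ => log ρ / log (1 - ρ)) (𝓝[<] 1) (𝓝 0) := by
  have hnum : Tendsto log (𝓝[<] 1) (𝓝 0) := by
    simpa using (continuousAt_log one_ne_zero).tendsto.mono_left nhdsWithin_le_nhds
  have hsub : Tendsto (fun ρ : ℝ => 1 - ρ) (𝓝[<] 1) (𝓝[>] 0) := by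
    simpa using (continuous_const.sub continuous_id).continuousWithinAt.tendsto_nhdsWithin
      (f := fun ρ : ℝ => 1 - ρ) (x := 1) (s := Iio 1) (t := Ioi 0)
      fun ρ (hρ : ρ < 1) => show 0 < 1 - ρ by linarith
  exact hnum.div_atBot (tendsto_log_nhdsGT_zero.comp hsub)

theorem mode_asymptotic
    (f : ℝ → ℕ → ℝ)
    (hf : ∀ ρ x, f ρ x = ρ ^ x * ∏' j : ℕ, (1 - ρ ^ (x + 1 + j)))
    (M : ℝ → ℕ)
    (hM : ∀ ρ ∈ Set.Ioo (0:ℝ) 1, IsLeast {x : ℕ | ∀ n : ℕ, f ρ n ≤ f ρ x} (M ρ)) :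
    Tendsto (fun ρ => (M ρ : ℝ) * Real.log ρ / Real.log (1 - ρ))
      (nhdsWithin 1 (Set.Iio 1)) (nhds 1) := by
  obtain rfl : f = frogDensity := funext₂ hf
  have hbounds : ∀ᶠ ρ in 𝓝[<] 1,
      (M ρ : ℝ) * log ρ / log (1 - ρ) ∈ Icc (1 - log ρ / log (1 - ρ)) 1 := by
    filter_upwards [Ioo_mem_nhdsLT one_pos] with ρ hρ
    obtain ⟨hlo, hhi⟩ := pow_succ_le_one_sub_lt_pow_of_isLeast hρ.1 hρ.2 (hM ρ hρ)
    exact mul_log_div_log_one_sub_mem_Icc hρ.1 hρ.2 hlo hhi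
  have hlower := tendsto_log_div_log_one_sub_nhdsLT_one.const_sub 1
  rw [sub_zero] at hlower
  exact tendsto_of_tendsto_of_tendsto_of_le_of_le' hlower tendsto_const_nhds
    (hbounds.mono fun _ h => h.1) (hbounds.mono fun _ h => h.2)
end

section
/- For 0 < ρ < 1 and real t with e^t ρ < 1, the moment generating function of the distribution with mass function f(x) = ρ^x ∏_{j=0}^∞ (1 - ρ^{x+1+j}) on ℕ equals ∏_{k=1}^∞ (1 - ρ^k)/(1 - e^t ρ^k); that is, ∑_{x=0}^∞ e^{tx} ρ^x ∏_{j=0}^∞ (1 - ρ^{x+1+j}) = ∏_{k=1}^∞ (1 - ρ^k)/(1 - e^t ρ^k). -/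
/-!
Write `(a; q)_∞ = ∏_{k ≥ 0} (1 - a q^k)` and `z = e^t ρ`. The mass function is
`ρ^x (ρ^{x+1}; ρ)_∞`, and the tails `a_x = (ρ^{x+1}; ρ)_∞` are bounded and satisfy
`a_x = (1 - ρ^{x+1}) a_{x+1}`. For any such sequence, `F(w) = ∑ w^x a_x` obeys
`(1 - w) F(w) = F(w ρ)`; iterating gives `(z; ρ)_N F(z) = F(z ρ^N) → F(0) = a_0`, so
`F(z) = (ρ; ρ)_∞ / (z; ρ)_∞`, which is the product on the right. With `a_x = 1 / (ρ; ρ)_x`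
this is Euler's expansion of `1 / (z; ρ)_∞`.
-/

open Filter Topology

noncomputable def qPochhammerInf {𝕜 : Type*} [NormedField 𝕜] (a q : 𝕜) : 𝕜 :=
  ∏' k : ℕ, (1 - a * q ^ k)

section NormedField

variable {𝕜 : Type*} [NormedField 𝕜]

lemma norm_mul_pow_lt_one {z q : 𝕜} (hz : ‖z‖ < 1) (hq : ‖q‖ ≤ 1) (n : ℕ) : ‖z * q ^ n‖ < 1 := by
  rw [norm_mul, norm_pow]
  exact (mul_le_of_le_one_right (norm_nonneg z) (pow_le_one₀ (norm_nonneg q) hq)).trans_lt hz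

lemma summable_norm_neg_mul_pow (a : 𝕜) {q : 𝕜} (hq : ‖q‖ < 1) :
    Summable fun k : ℕ => ‖-(a * q ^ k)‖ := by
  simpa only [norm_neg, norm_mul, norm_pow] using
    (summable_geometric_of_lt_one (norm_nonneg q) hq).mul_left ‖a‖

variable [CompleteSpace 𝕜] {q z : 𝕜}

lemma summable_pow_mul_of_norm_le {a : ℕ → 𝕜} {C : ℝ} (hC : ∀ x, ‖a x‖ ≤ C) {w : 𝕜}
    (hw : ‖w‖ < 1) : Summable fun x : ℕ => w ^ x * a x :=
  .of_norm_bounded ((summable_geometric_of_lt_one (norm_nonneg w) hw).mul_right C) fun x => by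
    rw [norm_mul, norm_pow]
    exact mul_le_mul_of_nonneg_left (hC x) (by positivity)

lemma multipliable_one_sub_mul_pow (a : 𝕜) (hq : ‖q‖ < 1) :
    Multipliable fun k : ℕ => 1 - a * q ^ k := by
  simpa only [sub_eq_add_neg] using multipliable_one_add_of_summable (summable_norm_neg_mul_pow a hq)

lemma tendsto_prod_range_qPochhammerInf (a : 𝕜) (hq : ‖q‖ < 1) :
    Tendsto (fun N => ∏ k ∈ Finset.range N, (1 - a * q ^ k)) atTop (𝓝 (qPochhammerInf a q)) :=
  (multipliable_one_sub_mul_pow a hq).hasProd.tendsto_prod_nat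

lemma qPochhammerInf_ne_zero {a : 𝕜} (ha : ‖a‖ < 1) (hq : ‖q‖ < 1) : qPochhammerInf a q ≠ 0 := by
  have hfactor (k : ℕ) : 1 + -(a * q ^ k) ≠ 0 := by
    rw [← sub_eq_add_neg, sub_ne_zero]
    intro h
    simpa [← h] using norm_mul_pow_lt_one ha hq.le k
  simpa only [qPochhammerInf, ← sub_eq_add_neg] using
    tprod_one_add_ne_zero_of_summable hfactor (summable_norm_neg_mul_pow a hq)

lemma qPochhammerInf_eq_one_sub_mul (a : 𝕜) (hq : ‖q‖ < 1) :
    qPochhammerInf a q = (1 - a) * qPochhammerInf (a * q) q := by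
  have h : Multipliable fun k : ℕ => 1 - a * q ^ (k + 1) := by
    simpa only [pow_succ', mul_assoc] using multipliable_one_sub_mul_pow (a * q) hq
  rw [qPochhammerInf, tprod_eq_zero_mul' (f := fun k => 1 - a * q ^ k) h, pow_zero, mul_one,
    qPochhammerInf]
  simp only [pow_succ', mul_assoc]

lemma qPochhammerInf_pow_succ (hq : ‖q‖ < 1) (x : ℕ) :
    qPochhammerInf (q ^ (x + 1)) q = (1 - q ^ (x + 1)) * qPochhammerInf (q ^ (x + 1 + 1)) q := by
  rw [qPochhammerInf_eq_one_sub_mul _ hq, ← pow_succ]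

section Recurrence

variable {a : ℕ → 𝕜} {C : ℝ}

lemma one_sub_mul_tsum_pow_mul (hC : ∀ x, ‖a x‖ ≤ C)
    (hrec : ∀ x, a x = (1 - q ^ (x + 1)) * a (x + 1)) {w : 𝕜} (hw : ‖w‖ < 1) :
    (1 - w) * ∑' x, w ^ x * a x = ∑' x, (w * q) ^ x * a x := by
  have hS := (summable_pow_mul_of_norm_le hC hw).hasSum
  set S := ∑' x, w ^ x * a x
  -- the recurrence turns `(w q)^{x+1} a_{x+1}` into a telescoping difference
  have hterm : (fun x => (w * q) ^ (x + 1) * a (x + 1)) =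
      fun x => w ^ (x + 1) * a (x + 1) - w * (w ^ x * a x) := by
    funext x
    rw [hrec x]
    ring
  have htail : HasSum (fun x => (w * q) ^ (x + 1) * a (x + 1)) ((1 - w) * S - a 0) := by
    have h := ((hasSum_nat_add_iff' 1).2 hS).sub (hS.mul_left w)
    rw [Finset.range_one, Finset.sum_singleton, pow_zero, one_mul,
      show S - a 0 - w * S = (1 - w) * S - a 0 by ring] at h
    rw [hterm]
    exact h
  have h := (hasSum_nat_add_iff' (f := fun x => (w * q) ^ x * a x) (g := (1 - w) * S) 1).1
  rw [Finset.range_one, Finset.sum_singleton, pow_zero, one_mul] at h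
  exact (h htail).tsum_eq.symm

lemma prod_range_mul_tsum_pow_mul (hC : ∀ x, ‖a x‖ ≤ C)
    (hrec : ∀ x, a x = (1 - q ^ (x + 1)) * a (x + 1)) (hq : ‖q‖ < 1) (hz : ‖z‖ < 1) (N : ℕ) :
    (∏ k ∈ Finset.range N, (1 - z * q ^ k)) * ∑' x, z ^ x * a x =
      ∑' x, (z * q ^ N) ^ x * a x := by
  induction N with
  | zero => simp
  | succ N ih =>
    rw [Finset.prod_range_succ, mul_comm _ (1 - z * q ^ N), mul_assoc, ih,
      one_sub_mul_tsum_pow_mul hC hrec (norm_mul_pow_lt_one hz hq.le N), mul_assoc, ← pow_succ]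

lemma tendsto_tsum_mul_pow_pow_mul (hC : ∀ x, ‖a x‖ ≤ C) (hq : ‖q‖ < 1) (hz : ‖z‖ < 1) :
    Tendsto (fun N : ℕ => ∑' x, (z * q ^ N) ^ x * a x) atTop (𝓝 (a 0)) := by
  have hlim : Tendsto (fun N : ℕ => z * q ^ N) atTop (𝓝 0) := by
    simpa using (tendsto_pow_atTop_nhds_zero_of_norm_lt_one hq).const_mul z
  have hbound (N x : ℕ) : ‖(z * q ^ N) ^ x * a x‖ ≤ ‖z‖ ^ x * C := by
    have hqN : (‖q‖ ^ N) ^ x ≤ 1 :=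
      pow_le_one₀ (by positivity) (pow_le_one₀ (norm_nonneg q) hq.le)
    calc ‖(z * q ^ N) ^ x * a x‖ = ‖z‖ ^ x * ((‖q‖ ^ N) ^ x * ‖a x‖) := by
          rw [norm_mul, norm_pow, norm_mul, norm_pow, mul_pow, mul_assoc]
      _ ≤ ‖z‖ ^ x * C := by
          gcongr
          exact (mul_le_of_le_one_left (norm_nonneg _) hqN).trans (hC x)
  have h := tendsto_tsum_of_dominated_convergence
    ((summable_geometric_of_lt_one (norm_nonneg z) hz).mul_right C)
    (fun x => (hlim.pow x).mul_const (a x)) (.of_forall (hbound ·))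
  rwa [tsum_eq_single 0 fun x hx => by rw [zero_pow hx, zero_mul], pow_zero, one_mul] at h

theorem qPochhammerInf_mul_tsum_pow_mul (hC : ∀ x, ‖a x‖ ≤ C)
    (hrec : ∀ x, a x = (1 - q ^ (x + 1)) * a (x + 1)) (hq : ‖q‖ < 1) (hz : ‖z‖ < 1) :
    qPochhammerInf z q * ∑' x, z ^ x * a x = a 0 :=
  tendsto_nhds_unique
    (((tendsto_prod_range_qPochhammerInf z hq).mul_const _).congr
      (prod_range_mul_tsum_pow_mul hC hrec hq hz))
    (tendsto_tsum_mul_pow_pow_mul hC hq hz)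

end Recurrence

end NormedField

lemma abs_qPochhammerInf_le_one {a q : ℝ} (ha₀ : 0 ≤ a) (ha₁ : a ≤ 1) (hq₀ : 0 ≤ q) (hq₁ : q ≤ 1) :
    |qPochhammerInf a q| ≤ 1 := by
  have hfactor (k : ℕ) : 0 ≤ 1 - a * q ^ k ∧ 1 - a * q ^ k ≤ 1 := by
    have : a * q ^ k ≤ 1 := mul_le_one₀ ha₁ (by positivity) (pow_le_one₀ hq₀ hq₁)
    constructor <;> nlinarith [pow_nonneg hq₀ k]
  rw [qPochhammerInf, abs_of_nonneg (tprod_nonneg fun k => (hfactor k).1)]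
  exact tprod_le_of_prod_le' le_rfl fun s =>
    Finset.prod_le_one (fun k _ => (hfactor k).1) fun k _ => (hfactor k).2

theorem frog_mgf (ρ : ℝ) (hρ : ρ ∈ Set.Ioo (0:ℝ) 1) (t : ℝ) (ht : Real.exp t * ρ < 1) :
    (∑' x : ℕ, Real.exp (t * x) * ρ ^ x * ∏' j : ℕ, (1 - ρ ^ (x + 1 + j))) =
      ∏' k : ℕ, (1 - ρ ^ (k + 1)) / (1 - Real.exp t * ρ ^ (k + 1)) := by
  obtain ⟨hρ₀, hρ₁⟩ := hρ
  set z := Real.exp t * ρ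
  have hq : ‖ρ‖ < 1 := by rwa [Real.norm_of_nonneg hρ₀.le]
  have hz : ‖z‖ < 1 := by rwa [Real.norm_of_nonneg (by positivity)]
  have hbound (x : ℕ) : ‖qPochhammerInf (ρ ^ (x + 1)) ρ‖ ≤ 1 :=
    abs_qPochhammerInf_le_one (by positivity) (pow_le_one₀ hρ₀.le hρ₁.le) hρ₀.le hρ₁.le
  have hlhs : (∑' x : ℕ, Real.exp (t * x) * ρ ^ x * ∏' j : ℕ, (1 - ρ ^ (x + 1 + j))) =
      ∑' x : ℕ, z ^ x * qPochhammerInf (ρ ^ (x + 1)) ρ := by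
    refine tsum_congr fun x => ?_
    simp only [qPochhammerInf, pow_add ρ (x + 1), mul_comm t, Real.exp_nat_mul, z, mul_pow]
  have hrhs : (∏' k : ℕ, (1 - ρ ^ (k + 1)) / (1 - Real.exp t * ρ ^ (k + 1))) =
      qPochhammerInf ρ ρ / qPochhammerInf z ρ := by
    rw [qPochhammerInf, qPochhammerInf, ← Multipliable.tprod_div₀
      (multipliable_one_sub_mul_pow ρ hq) (multipliable_one_sub_mul_pow z hq)
      (qPochhammerInf_ne_zero hz hq)]
    simp only [z, pow_succ', mul_assoc]
  rw [hlhs, hrhs, eq_div_iff (qPochhammerInf_ne_zero hz hq), mul_comm,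
    qPochhammerInf_mul_tsum_pow_mul hbound (qPochhammerInf_pow_succ hq) hq hz, zero_add, pow_one]
end

section
/- As ρ → 1⁻, ∑_{k=1}^∞ ρ^k/(1-ρ^k) is asymptotically equivalent to (1/(1-ρ)) · ln(1/(1-ρ)); i.e., the ratio of the two expressions tends to 1. -/
open Filter Set Topology

/-!
Bernoulli's inequality, used in both directions, traps each term between
`ρⁿ / n ≤ (1 - ρ) ρⁿ / (1 - ρⁿ) ≤ ρⁿ / n + (1 - ρ) ρⁿ`. Summing over `n ≥ 1` against
`-log (1 - ρ) = ∑ ρⁿ / n` and the geometric series gives, for `L(ρ) = ∑ ρⁿ / (1 - ρⁿ)`,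
`-log (1 - ρ) ≤ (1 - ρ) L(ρ) ≤ -log (1 - ρ) + ρ`, and the ratio in question equals
`(1 - ρ) L(ρ) / -log (1 - ρ)`, which is squeezed to `1` because `-log (1 - ρ) → ∞`.
-/

theorem pow_mul_one_add_mul_one_sub_le_one {ρ : ℝ} (hρ₀ : 0 ≤ ρ) (hρ₂ : ρ ≤ 2) (n : ℕ) :
    ρ ^ n * (1 + n * (1 - ρ)) ≤ 1 :=
  calc ρ ^ n * (1 + n * (1 - ρ)) ≤ ρ ^ n * (1 + (1 - ρ)) ^ n := by
        gcongr; exact one_add_mul_le_pow (by linarith) n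
    _ = (1 - (1 - ρ) ^ 2) ^ n := by rw [← mul_pow]; ring
    _ ≤ 1 := pow_le_one₀ (by nlinarith) (by nlinarith)

section LambertTerms

variable {ρ : ℝ} {n : ℕ}

theorem pow_div_le_one_sub_mul_pow_div_one_sub_pow (hρ₀ : 0 ≤ ρ) (hρ₁ : ρ < 1) (hn : 0 < n) :
    ρ ^ n / n ≤ (1 - ρ) * (ρ ^ n / (1 - ρ ^ n)) := by
  have h_pos : 0 < 1 - ρ ^ n := sub_pos.2 (pow_lt_one₀ hρ₀ hρ₁ hn.ne')
  have h_le : 1 - ρ ^ n ≤ n * (1 - ρ) := by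
    linarith [one_add_mul_sub_le_pow (by linarith : (-1 : ℝ) ≤ ρ) n]
  calc ρ ^ n / n = ρ ^ n * (1 - ρ) / (n * (1 - ρ)) := by
        rw [mul_div_mul_right _ _ (sub_pos.2 hρ₁).ne']
    _ ≤ ρ ^ n * (1 - ρ) / (1 - ρ ^ n) := by gcongr
    _ = (1 - ρ) * (ρ ^ n / (1 - ρ ^ n)) := by ring

theorem one_sub_mul_pow_div_one_sub_pow_le (hρ₀ : 0 ≤ ρ) (hρ₁ : ρ < 1) (hn : 0 < n) :
    (1 - ρ) * (ρ ^ n / (1 - ρ ^ n)) ≤ ρ ^ n / n + (1 - ρ) * ρ ^ n := by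
  have h_pos : 0 < 1 - ρ ^ n := sub_pos.2 (pow_lt_one₀ hρ₀ hρ₁ hn.ne')
  have hn' : (0 : ℝ) < n := Nat.cast_pos.2 hn
  have key := pow_mul_one_add_mul_one_sub_le_one hρ₀ (by linarith) n
  rw [← mul_div_assoc, div_le_iff₀ h_pos, div_add' _ _ _ hn'.ne', div_mul_eq_mul_div,
    le_div_iff₀ hn']
  nlinarith [pow_nonneg hρ₀ n]

end LambertTerms

noncomputable def lambertSum (ρ : ℝ) : ℝ := ∑' k : ℕ, ρ ^ (k + 1) / (1 - ρ ^ (k + 1))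

section LambertSum

variable {ρ : ℝ}

theorem summable_lambert (hρ₀ : 0 ≤ ρ) (hρ₁ : ρ < 1) :
    Summable fun k : ℕ => ρ ^ (k + 1) / (1 - ρ ^ (k + 1)) := by
  refine Summable.of_nonneg_of_le (fun k => ?_) (fun k => ?_)
    ((summable_geometric_of_lt_one hρ₀ hρ₁).mul_right (ρ / (1 - ρ)))
  · exact div_nonneg (pow_nonneg hρ₀ _) (sub_nonneg.2 (pow_le_one₀ hρ₀ hρ₁.le))
  · have : ρ ^ (k + 1) ≤ ρ := pow_le_of_le_one hρ₀ hρ₁.le k.succ_ne_zero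
    calc ρ ^ (k + 1) / (1 - ρ ^ (k + 1)) ≤ ρ ^ (k + 1) / (1 - ρ) := by gcongr
    _ = ρ ^ k * (ρ / (1 - ρ)) := by ring

theorem neg_log_one_sub_le_mul_lambertSum (hρ₀ : 0 ≤ ρ) (hρ₁ : ρ < 1) :
    -Real.log (1 - ρ) ≤ (1 - ρ) * lambertSum ρ := by
  have h_log := Real.hasSum_pow_div_log_of_abs_lt_one (abs_lt.2 ⟨by linarith, hρ₁⟩)
  rw [lambertSum, ← tsum_mul_left, ← h_log.tsum_eq]
  refine h_log.summable.tsum_le_tsum (fun k => ?_)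
    ((summable_lambert hρ₀ hρ₁).mul_left _)
  exact_mod_cast pow_div_le_one_sub_mul_pow_div_one_sub_pow hρ₀ hρ₁ k.succ_pos

theorem mul_lambertSum_le_neg_log_one_sub_add (hρ₀ : 0 ≤ ρ) (hρ₁ : ρ < 1) :
    (1 - ρ) * lambertSum ρ ≤ -Real.log (1 - ρ) + ρ := by
  have h_geom : HasSum (fun k : ℕ => (1 - ρ) * ρ ^ (k + 1)) ρ := by
    simpa [pow_succ, ← mul_assoc, mul_comm, (sub_pos.2 hρ₁).ne'] using
      (hasSum_geometric_of_lt_one hρ₀ hρ₁).mul_left (ρ * (1 - ρ))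
  have h_log := Real.hasSum_pow_div_log_of_abs_lt_one (abs_lt.2 ⟨by linarith, hρ₁⟩)
  rw [lambertSum, ← tsum_mul_left]
  refine hasSum_le (fun k => ?_) ((summable_lambert hρ₀ hρ₁).mul_left _).hasSum (h_log.add h_geom)
  exact_mod_cast one_sub_mul_pow_div_one_sub_pow_le hρ₀ hρ₁ k.succ_pos

end LambertSum

theorem div_one_div_mul_log_one_div (L a : ℝ) :
    L / (1 / a * Real.log (1 / a)) = a * L / -Real.log a := by
  rw [one_div, Real.log_inv, inv_mul_eq_div, div_div_eq_mul_div, mul_comm]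

theorem tendsto_neg_log_one_sub_nhdsLT_one :
    Tendsto (fun ρ : ℝ => -Real.log (1 - ρ)) (𝓝[<] 1) atTop := by
  refine tendsto_neg_atBot_atTop.comp (Real.tendsto_log_nhdsGT_zero.comp ?_)
  refine tendsto_nhdsWithin_of_tendsto_nhds_of_eventually_within _ ?_ ?_
  · simpa using ((continuous_sub_left (1 : ℝ)).tendsto 1).mono_left nhdsWithin_le_nhds
  · exact eventually_mem_nhdsWithin.mono fun ρ hρ => mem_Ioi.2 (sub_pos.2 hρ)

theorem lambert_asymptotic :
    Tendsto
      (fun ρ : ℝ =>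
        (∑' k : ℕ, ρ ^ (k + 1) / (1 - ρ ^ (k + 1))) /
          ((1 / (1 - ρ)) * Real.log (1 / (1 - ρ))))
      (nhdsWithin 1 (Set.Iio 1)) (nhds 1) := by
  have h_upper : Tendsto (fun ρ : ℝ => 1 + ρ / -Real.log (1 - ρ)) (𝓝[<] 1) (𝓝 1) := by
    simpa using tendsto_const_nhds.add
      ((tendsto_nhdsWithin_of_tendsto_nhds tendsto_id).div_atTop tendsto_neg_log_one_sub_nhdsLT_one)
  have h_bounds : ∀ᶠ ρ in 𝓝[<] (1 : ℝ), 1 ≤ (1 - ρ) * lambertSum ρ / -Real.log (1 - ρ) ∧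
      (1 - ρ) * lambertSum ρ / -Real.log (1 - ρ) ≤ 1 + ρ / -Real.log (1 - ρ) := by
    filter_upwards [Ioo_mem_nhdsLT (show (0 : ℝ) < 1 by norm_num)] with ρ ⟨hρ₀, hρ₁⟩
    have hM_pos : 0 < -Real.log (1 - ρ) := neg_pos.2 (Real.log_neg (by linarith) (by linarith))
    rw [le_div_iff₀ hM_pos, one_mul, div_le_iff₀ hM_pos, add_mul, one_mul,
      div_mul_cancel₀ _ hM_pos.ne']
    exact ⟨neg_log_one_sub_le_mul_lambertSum hρ₀.le hρ₁,
      mul_lambertSum_le_neg_log_one_sub_add hρ₀.le hρ₁⟩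
  change Tendsto (fun ρ => lambertSum ρ / (1 / (1 - ρ) * Real.log (1 / (1 - ρ)))) _ _
  simp_rw [div_one_div_mul_log_one_div]
  exact tendsto_of_tendsto_of_tendsto_of_le_of_le' tendsto_const_nhds h_upper
    (h_bounds.mono fun _ => And.left) (h_bounds.mono fun _ => And.right)
end

section
/- For each integer j ≥ 1, as ρ → 1⁻, ∑_{k=1}^∞ k^j ρ^k/(1-ρ^k) is asymptotically equivalent to j! ζ(j+1) / (1-ρ)^{j+1}, where ζ is the Riemann zeta function. -/
/-!
Expanding `ρ^k / (1 - ρ^k)` as a geometric series and swapping the sums turns the series into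
`∑_{m ≥ 1} Li_{-j}(ρ^m)`. Comparing `k^j` with rising and falling factorials gives
`j! x^{j+1} ≤ (1 - x)^{j+1} Li_{-j}(x) ≤ j! x` on `[0, 1)`, so each term
`(1 - ρ)^{j+1} Li_{-j}(ρ^m)` tends to `j! / m^{j+1}` because `(1 - ρ^m) / (1 - ρ) → m`.
By AM-GM, `(1 - ρ^m) / (1 - ρ) = 1 + ρ + ⋯ + ρ^{m-1} ≥ m ρ^{(m-1)/2}`, which bounds every term by
`j! / m^2` when `j ≥ 1`, and dominated convergence sums the limits to `j! ζ(j+1)`.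
-/

open Filter Set

/-- The polylogarithm `Li_{-j}(x) = ∑_{k ≥ 1} k ^ j x ^ k`. -/
noncomputable def negPolylog (j : ℕ) (x : ℝ) : ℝ := ∑' k : ℕ, ((k : ℝ) + 1) ^ j * x ^ (k + 1)

lemma summable_negPolylog (j : ℕ) {x : ℝ} (hx : |x| < 1) :
    Summable fun k : ℕ => ((k : ℝ) + 1) ^ j * x ^ (k + 1) := by
  have h := summable_pow_mul_geometric_of_norm_lt_one (R := ℝ) j (by rwa [Real.norm_eq_abs])
  exact_mod_cast (summable_nat_add_iff 1).2 h

lemma negPolylog_nonneg (j : ℕ) {x : ℝ} (hx : 0 ≤ x) : 0 ≤ negPolylog j x :=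
  tsum_nonneg fun _ => by positivity

lemma one_sub_pow_mul_negPolylog_le (j : ℕ) {x : ℝ} (h0 : 0 ≤ x) (h1 : x < 1) :
    (1 - x) ^ (j + 1) * negPolylog j x ≤ j.factorial * x := by
  have hg := (hasSum_choose_mul_geometric_of_norm_lt_one j
    (by rwa [Real.norm_eq_abs, abs_of_nonneg h0])).mul_left ((j.factorial : ℝ) * x)
  have hle : negPolylog j x ≤ j.factorial * x * (1 / (1 - x) ^ (j + 1)) := by
    refine hg.tsum_eq ▸ (summable_negPolylog j (by rwa [abs_of_nonneg h0])).tsum_le_tsum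
      (fun k => ?_) hg.summable
    have hk : ((k : ℝ) + 1) ^ j ≤ j.factorial * ((k + j).choose j : ℕ) := by
      exact_mod_cast (Nat.pow_succ_le_ascFactorial _ _).trans_eq
        (Nat.ascFactorial_eq_factorial_mul_choose k j)
    calc ((k : ℝ) + 1) ^ j * x ^ (k + 1) ≤ (j.factorial * ((k + j).choose j : ℕ)) * x ^ (k + 1) :=
          by gcongr
      _ = _ := by ring
  have hpos : 0 < (1 - x) ^ (j + 1) := pow_pos (by linarith) _
  calc (1 - x) ^ (j + 1) * negPolylog j x
      ≤ (1 - x) ^ (j + 1) * (j.factorial * x * (1 / (1 - x) ^ (j + 1))) := by gcongr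
    _ = j.factorial * x := by field_simp

lemma factorial_mul_pow_le_one_sub_pow_mul_negPolylog (j : ℕ) {x : ℝ} (h0 : 0 ≤ x)
    (h1 : x < 1) : j.factorial * x ^ (j + 1) ≤ (1 - x) ^ (j + 1) * negPolylog j x := by
  have hg := (hasSum_choose_mul_geometric_of_norm_lt_one j
    (by rwa [Real.norm_eq_abs, abs_of_nonneg h0])).mul_left ((j.factorial : ℝ) * x ^ (j + 1))
  have hF := summable_negPolylog j (by rwa [abs_of_nonneg h0])
  have hle : j.factorial * x ^ (j + 1) * (1 / (1 - x) ^ (j + 1)) ≤ negPolylog j x := by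
    refine hg.tsum_eq ▸ (hg.summable.tsum_le_tsum (fun n => ?_) (hF.comp_injective
      (add_left_injective j))).trans (tsum_comp_le_tsum_of_inj hF (fun _ => by positivity)
      (add_left_injective j))
    have hn : (j.factorial * ((n + j).choose j : ℕ) : ℝ) ≤ (((n + j : ℕ) : ℝ) + 1) ^ j := by
      rw [← Nat.cast_mul, ← Nat.descFactorial_eq_factorial_mul_choose]
      exact_mod_cast (Nat.descFactorial_le_pow _ _).trans (Nat.pow_le_pow_left (by omega) _)
    calc j.factorial * x ^ (j + 1) * (((n + j).choose j : ℕ) * x ^ n)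
        = (j.factorial * ((n + j).choose j : ℕ) : ℝ) * x ^ (n + j + 1) := by ring
      _ ≤ (((n + j : ℕ) : ℝ) + 1) ^ j * x ^ (n + j + 1) := by gcongr
  have hpos : 0 < (1 - x) ^ (j + 1) := pow_pos (by linarith) _
  calc (j.factorial : ℝ) * x ^ (j + 1)
      = (1 - x) ^ (j + 1) * (j.factorial * x ^ (j + 1) * (1 / (1 - x) ^ (j + 1))) := by
        field_simp
    _ ≤ (1 - x) ^ (j + 1) * negPolylog j x := by gcongr

lemma tendsto_one_sub_pow_mul_negPolylog (j : ℕ) :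
    Tendsto (fun x : ℝ => (1 - x) ^ (j + 1) * negPolylog j x) (nhdsWithin 1 (Iio 1))
      (nhds (j.factorial : ℝ)) := by
  have hlim : ∀ n : ℕ, Tendsto (fun x : ℝ => (j.factorial : ℝ) * x ^ n) (nhdsWithin 1 (Iio 1))
      (nhds (j.factorial : ℝ)) := fun n => by
    simpa using (((continuous_pow n).tendsto (1 : ℝ)).const_mul _).mono_left nhdsWithin_le_nhds
  refine tendsto_of_tendsto_of_tendsto_of_le_of_le' (hlim (j + 1)) (hlim 1) ?_ ?_ <;>
    filter_upwards [Ioo_mem_nhdsLT zero_lt_one] with x hx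
  · exact factorial_mul_pow_le_one_sub_pow_mul_negPolylog j hx.1.le hx.2
  · simpa using one_sub_pow_mul_negPolylog_le j hx.1.le hx.2

open Finset in
lemma sq_mul_pow_le_sq_geom_sum (m : ℕ) {ρ : ℝ} (hρ : 0 ≤ ρ) :
    ((m : ℝ) + 1) ^ 2 * ρ ^ m ≤ (∑ i ∈ range (m + 1), ρ ^ i) ^ 2 := by
  have hcs := sum_sq_le_sum_mul_sum_of_sq_le_mul (range (m + 1))
    (r := fun _ => √(ρ ^ m)) (f := fun i => ρ ^ i) (g := fun i => ρ ^ (m - i))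
    (fun i _ => by positivity) (fun i _ => by positivity) fun i hi => by
      rw [Real.sq_sqrt (by positivity), ← pow_add, Nat.add_sub_cancel' (mem_range_succ_iff.1 hi)]
  have hreflect : ∑ i ∈ range (m + 1), ρ ^ (m - i) = ∑ i ∈ range (m + 1), ρ ^ i := by
    simpa using sum_range_reflect (fun i => ρ ^ i) (m + 1)
  rwa [sum_const, card_range, nsmul_eq_mul, mul_pow, Real.sq_sqrt (by positivity), hreflect,
    ← sq, Nat.cast_succ] at hcs

lemma tsum_lambert_eq_tsum_tsum {a : ℕ → ℝ} (ha : ∀ k, 0 ≤ a k) {ρ : ℝ} (h0 : 0 ≤ ρ)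
    (h1 : ρ < 1) (hs : Summable fun k => a k * ρ ^ (k + 1)) :
    ∑' k, a k * ρ ^ (k + 1) / (1 - ρ ^ (k + 1)) = ∑' m, ∑' k, a k * (ρ ^ (m + 1)) ^ (k + 1) := by
  set f : ℕ → ℕ → ℝ := fun k m => a k * (ρ ^ (m + 1)) ^ (k + 1)
  have hpow (k : ℕ) : ρ ^ (k + 1) < 1 := pow_lt_one₀ h0 h1 k.succ_ne_zero
  have hterm (k : ℕ) : 0 ≤ a k * ρ ^ (k + 1) := mul_nonneg (ha k) (by positivity)
  have hrow (k : ℕ) : HasSum (f k) (a k * ρ ^ (k + 1) / (1 - ρ ^ (k + 1))) := by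
    have hf : f k = fun m => a k * ρ ^ (k + 1) * (ρ ^ (k + 1)) ^ m := by
      ext m
      simp only [f, ← pow_mul]
      ring
    rw [hf, div_eq_mul_inv]
    exact (hasSum_geometric_of_lt_one (by positivity) (hpow k)).mul_left _
  have hrow_le (k : ℕ) : a k * ρ ^ (k + 1) / (1 - ρ ^ (k + 1)) ≤ a k * ρ ^ (k + 1) / (1 - ρ) := by
    have hρk : ρ ^ (k + 1) ≤ ρ := pow_le_of_le_one h0 h1.le k.succ_ne_zero
    gcongr
    exact hterm k
  have hf : Summable (Function.uncurry f) := by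
    refine (summable_prod_of_nonneg fun p => mul_nonneg (ha p.1) (by positivity)).2
      ⟨fun k => (hrow k).summable, ?_⟩
    exact ((hs.div_const _).of_nonneg_of_le (fun k => div_nonneg (hterm k)
      (by linarith [hpow k])) hrow_le).congr fun k => (hrow k).tsum_eq.symm
  rw [hf.tsum_comm]
  exact tsum_congr fun k => (hrow k).tsum_eq.symm

open Finset in
lemma one_sub_pow_mul_negPolylog_pow_succ (j m : ℕ) {ρ : ℝ} (hρ : 0 ≤ ρ) :
    (1 - ρ) ^ (j + 1) * negPolylog j (ρ ^ (m + 1)) =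
      (1 - ρ ^ (m + 1)) ^ (j + 1) * negPolylog j (ρ ^ (m + 1)) /
        (∑ i ∈ range (m + 1), ρ ^ i) ^ (j + 1) := by
  have hS : (∑ i ∈ range (m + 1), ρ ^ i) ≠ 0 := (geom_sum_pos hρ m.succ_ne_zero).ne'
  rw [← mul_neg_geom_sum, mul_pow]
  field_simp

lemma tendsto_one_sub_pow_mul_negPolylog_pow_succ (j m : ℕ) :
    Tendsto (fun ρ : ℝ => (1 - ρ) ^ (j + 1) * negPolylog j (ρ ^ (m + 1)))
      (nhdsWithin 1 (Iio 1)) (nhds (j.factorial / ((m : ℝ) + 1) ^ (j + 1))) := by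
  have hpow : Tendsto (fun ρ : ℝ => ρ ^ (m + 1)) (nhdsWithin 1 (Iio 1)) (nhdsWithin 1 (Iio 1)) :=
    tendsto_nhdsWithin_of_tendsto_nhds_of_eventually_within _
      (by simpa using ((continuous_pow (m + 1)).tendsto (1 : ℝ)).mono_left nhdsWithin_le_nhds)
      (by filter_upwards [Ioo_mem_nhdsLT zero_lt_one] with ρ hρ
          using pow_lt_one₀ hρ.1.le hρ.2 m.succ_ne_zero)
  have hgeom : Tendsto (fun ρ : ℝ => (∑ i ∈ Finset.range (m + 1), ρ ^ i) ^ (j + 1))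
      (nhdsWithin 1 (Iio 1)) (nhds (((m : ℝ) + 1) ^ (j + 1))) := by
    have hc : Continuous fun ρ : ℝ => (∑ i ∈ Finset.range (m + 1), ρ ^ i) ^ (j + 1) := by
      fun_prop
    simpa using (hc.tendsto 1).mono_left nhdsWithin_le_nhds
  refine (((tendsto_one_sub_pow_mul_negPolylog j).comp hpow).div hgeom
    (by positivity)).congr' ?_
  filter_upwards [Ioo_mem_nhdsLT zero_lt_one] with ρ hρ
  exact (one_sub_pow_mul_negPolylog_pow_succ j m hρ.1.le).symm

open Finset in
lemma one_sub_pow_mul_negPolylog_pow_succ_le {j : ℕ} (hj : 1 ≤ j) (m : ℕ) {ρ : ℝ} (h0 : 0 ≤ ρ)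
    (h1 : ρ < 1) :
    (1 - ρ) ^ (j + 1) * negPolylog j (ρ ^ (m + 1)) ≤ j.factorial / ((m : ℝ) + 1) ^ 2 := by
  set S := ∑ i ∈ range (m + 1), ρ ^ i
  have hS : 1 ≤ S := by
    simpa using single_le_sum (f := fun i => ρ ^ i) (fun i _ => by positivity)
      (mem_range.2 m.succ_pos)
  have hsq : ρ ^ (m + 1) * ((m : ℝ) + 1) ^ 2 ≤ S ^ 2 := by
    calc ρ ^ (m + 1) * ((m : ℝ) + 1) ^ 2 = ρ * (((m : ℝ) + 1) ^ 2 * ρ ^ m) := by ring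
      _ ≤ 1 * S ^ 2 := by gcongr; exact sq_mul_pow_le_sq_geom_sum m h0
      _ = S ^ 2 := one_mul _
  rw [one_sub_pow_mul_negPolylog_pow_succ j m h0]
  calc (1 - ρ ^ (m + 1)) ^ (j + 1) * negPolylog j (ρ ^ (m + 1)) / S ^ (j + 1)
      ≤ j.factorial * ρ ^ (m + 1) / S ^ (j + 1) :=
        div_le_div_of_nonneg_right (one_sub_pow_mul_negPolylog_le j (by positivity)
          (pow_lt_one₀ h0 h1 m.succ_ne_zero)) (by positivity)
    _ ≤ j.factorial * ρ ^ (m + 1) / S ^ 2 :=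
        div_le_div_of_nonneg_left (by positivity) (by positivity)
          (pow_le_pow_right₀ hS (by omega))
    _ ≤ j.factorial / ((m : ℝ) + 1) ^ 2 := by
        rw [div_le_div_iff₀ (by positivity) (by positivity), mul_assoc]
        exact mul_le_mul_of_nonneg_left hsq (by positivity)

lemma summable_one_div_nat_add_one_pow {p : ℕ} (hp : 1 < p) :
    Summable fun n : ℕ => 1 / ((n : ℝ) + 1) ^ p := by
  exact_mod_cast (summable_nat_add_iff 1).2 (Real.summable_one_div_nat_pow.2 hp)

lemma tendsto_tsum_one_sub_pow_mul_negPolylog_pow_succ {j : ℕ} (hj : 1 ≤ j) :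
    Tendsto (fun ρ : ℝ => ∑' m : ℕ, (1 - ρ) ^ (j + 1) * negPolylog j (ρ ^ (m + 1)))
      (nhdsWithin 1 (Iio 1))
      (nhds (j.factorial * ∑' n : ℕ, 1 / ((n : ℝ) + 1) ^ (j + 1))) := by
  rw [← tsum_mul_left]
  simp_rw [mul_one_div]
  refine tendsto_tsum_of_dominated_convergence
    ((summable_one_div_nat_add_one_pow one_lt_two).mul_left (j.factorial : ℝ))
    (tendsto_one_sub_pow_mul_negPolylog_pow_succ j) ?_
  filter_upwards [Ioo_mem_nhdsLT zero_lt_one] with ρ hρ m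
  rw [Real.norm_of_nonneg (mul_nonneg (pow_nonneg (by linarith [hρ.2]) _)
    (negPolylog_nonneg j (pow_nonneg hρ.1.le _))), mul_one_div]
  exact one_sub_pow_mul_negPolylog_pow_succ_le hj m hρ.1.le hρ.2

theorem higher_cumulant_asymptotic (j : ℕ) (hj : 1 ≤ j) :
    Tendsto
      (fun ρ : ℝ =>
        (∑' k : ℕ, ((k : ℝ) + 1) ^ j * ρ ^ (k + 1) / (1 - ρ ^ (k + 1))) /
          ((Nat.factorial j : ℝ) * (∑' n : ℕ, 1 / ((n : ℝ) + 1) ^ (j + 1)) / (1 - ρ) ^ (j + 1)))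
      (nhdsWithin 1 (Set.Iio 1)) (nhds 1) := by
  set c := (j.factorial : ℝ) * ∑' n : ℕ, 1 / ((n : ℝ) + 1) ^ (j + 1)
  have hc : 0 < c := mul_pos (by positivity) <|
    (summable_one_div_nat_add_one_pow (by omega)).tsum_pos (fun _ => by positivity) 0
      (by positivity)
  have hlim := (tendsto_tsum_one_sub_pow_mul_negPolylog_pow_succ hj).div_const c
  rw [div_self hc.ne'] at hlim
  refine hlim.congr' ?_
  filter_upwards [Ioo_mem_nhdsLT zero_lt_one] with ρ hρ
  have hlambert : ∑' k : ℕ, ((k : ℝ) + 1) ^ j * ρ ^ (k + 1) / (1 - ρ ^ (k + 1)) =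
      ∑' m : ℕ, negPolylog j (ρ ^ (m + 1)) :=
    tsum_lambert_eq_tsum_tsum (fun _ => by positivity) hρ.1.le hρ.2
      (summable_negPolylog j (by rw [abs_of_pos hρ.1]; exact hρ.2))
  have hρ1 : (1 - ρ) ^ (j + 1) ≠ 0 := pow_ne_zero _ (by linarith [hρ.2])
  rw [hlambert, tsum_mul_left]
  field_simp
end

section
/- Let X_ρ be a random variable on ℕ with P(X_ρ = x) = ρ^x ∏_{j=0}^∞ (1 - ρ^{x+1+j}), and set Y_ρ = (ln ρ / ln(1-ρ)) X_ρ. Then E(Y_ρ) → 1 and Var(Y_ρ) → 0 as ρ → 1⁻; consequently, for every ε > 0, P(|Y_ρ - 1| > ε) → 0 as ρ → 1⁻. -/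
/-!
Write `c = log ρ / log (1 - ρ)`, so that `ρ ^ n = (1 - ρ) ^ (c * n)` and `c = o(1 - ρ)` as
`ρ → 1⁻`. The law of `X_ρ` satisfies `P(X_ρ = x) ≤ ρ ^ x` and
`P(X_ρ ≤ n) = ∏_{k > n} (1 - ρ ^ k) ≤ exp (-ρ ^ (n + 1) / (1 - ρ))`. For fixed `δ > 0`
the second bound gives `P(c X_ρ < 1 - δ) ≤ exp (-(1 - ρ) ^ (-δ))`, and the first makes
the contribution of `{c X_ρ > 1 + δ}` to `E[(c X_ρ) ^ 2]` of order `(1 - ρ) ^ δ`. Hence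
`E[(c X_ρ) ^ 2] ≤ 1 + O(δ)` and `E[c X_ρ] ≥ 1 - O(δ)`, so `E[(Y_ρ - 1) ^ 2] → 0`. This `L²`
convergence gives the three claims: the mean by Jensen, the variance as
`E[(Y_ρ - 1) ^ 2] - (E[Y_ρ] - 1) ^ 2`, and the probability by Chebyshev.
-/

open Filter Set Topology Finset Real

section Moments

variable {p y : ℕ → ℝ}

theorem summable_mul_of_summable_sq_mul (hp : ∀ x, 0 ≤ p x) (hp1 : Summable p)
    (hy : Summable fun x => y x ^ 2 * p x) : Summable fun x => y x * p x :=
  (hy.add hp1).of_norm_bounded fun x => by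
    rw [Real.norm_eq_abs, abs_mul, abs_of_nonneg (hp x)]
    nlinarith [hp x, sq_nonneg (|y x| - 1), sq_abs (y x)]

theorem hasSum_sq_sub_mul (hp1 : HasSum p 1) (hy1 : Summable fun x => y x * p x)
    (hy2 : Summable fun x => y x ^ 2 * p x) (a : ℝ) :
    HasSum (fun x => (y x - a) ^ 2 * p x)
      (∑' x, y x ^ 2 * p x - 2 * a * ∑' x, y x * p x + a ^ 2) := by
  have h := (hy2.hasSum.sub (hy1.hasSum.mul_left (2 * a))).add (hp1.mul_left (a ^ 2))
  rw [mul_one] at h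
  exact h.congr_fun fun x => by ring

theorem sq_tsum_mul_le_tsum_sq_mul (hp : ∀ x, 0 ≤ p x) (hp1 : HasSum p 1)
    (hy1 : Summable fun x => y x * p x) (hy2 : Summable fun x => y x ^ 2 * p x) :
    (∑' x, y x * p x) ^ 2 ≤ ∑' x, y x ^ 2 * p x := by
  have h := (hasSum_sq_sub_mul hp1 hy1 hy2 (∑' x, y x * p x)).nonneg
    fun x => mul_nonneg (sq_nonneg _) (hp x)
  linarith

theorem tsum_ite_le_tsum_sq_sub_mul_div (hp : ∀ x, 0 ≤ p x) {a ε : ℝ} (hε : 0 < ε)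
    (hy : Summable fun x => (y x - a) ^ 2 * p x) :
    ∑' x, (if ε < |y x - a| then p x else 0) ≤ (∑' x, (y x - a) ^ 2 * p x) / ε ^ 2 := by
  have hle : ∀ x, (if ε < |y x - a| then p x else 0) ≤ (y x - a) ^ 2 * p x / ε ^ 2 := by
    intro x
    split_ifs with hx
    · rw [le_div_iff₀ (by positivity)]
      have : ε ^ 2 ≤ (y x - a) ^ 2 := by
        rw [← sq_abs (y x - a)]; exact pow_le_pow_left₀ hε.le hx.le 2
      nlinarith [hp x]
    · have := hp x; positivity
  have h0 : ∀ x, 0 ≤ if ε < |y x - a| then p x else 0 := fun x => by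
    split_ifs
    exacts [hp x, le_rfl]
  rw [← tsum_div_const]
  exact Summable.tsum_le_tsum hle ((hy.div_const _).of_nonneg_of_le h0 hle) (hy.div_const _)

theorem mul_one_sub_sum_range_le_tsum (hp : ∀ x, 0 ≤ p x) (hp1 : HasSum p 1)
    (hs : Summable fun x : ℕ => (x : ℝ) * p x) (M : ℕ) :
    M * (1 - ∑ x ∈ range M, p x) ≤ ∑' x : ℕ, (x : ℝ) * p x := by
  have hsplit := hp1.summable.sum_add_tsum_nat_add M
  rw [hp1.tsum_eq] at hsplit
  calc (M : ℝ) * (1 - ∑ x ∈ range M, p x) = ∑' m, (M : ℝ) * p (m + M) := by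
        rw [tsum_mul_left, ← hsplit, add_sub_cancel_left]
    _ ≤ ∑' m, ((m + M : ℕ) : ℝ) * p (m + M) := by
        refine Summable.tsum_le_tsum (fun m => ?_)
          (((summable_nat_add_iff M).2 hp1.summable).mul_left _) ((summable_nat_add_iff M).2 hs)
        exact mul_le_mul_of_nonneg_right (by exact_mod_cast M.le_add_left m) (hp _)
    _ ≤ ∑' x : ℕ, (x : ℝ) * p x := by
        rw [← hs.sum_add_tsum_nat_add M]
        exact le_add_of_nonneg_left (sum_nonneg fun x _ => mul_nonneg x.cast_nonneg (hp x))

theorem tendsto_moments_of_tendsto_tsum_sq_sub_one {ι : Type*} {l : Filter ι}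
    {p y : ι → ℕ → ℝ}
    (hp : ∀ᶠ i in l,
      (∀ x, 0 ≤ p i x) ∧ HasSum (p i) 1 ∧ Summable fun x => y i x ^ 2 * p i x)
    (hD : Tendsto (fun i => ∑' x, (y i x - 1) ^ 2 * p i x) l (𝓝 0)) :
    Tendsto (fun i => ∑' x, y i x * p i x) l (𝓝 1) ∧
    Tendsto (fun i => ∑' x, y i x ^ 2 * p i x - (∑' x, y i x * p i x) ^ 2) l (𝓝 0) ∧
    ∀ ε : ℝ, 0 < ε →
      Tendsto (fun i => ∑' x, if ε < |y i x - 1| then p i x else 0) l (𝓝 0) := by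
  set D := fun i => ∑' x, (y i x - 1) ^ 2 * p i x
  set E₁ := fun i => ∑' x, y i x * p i x
  set E₂ := fun i => ∑' x, y i x ^ 2 * p i x
  have hmom : ∀ᶠ i in l, D i = E₂ i - 2 * E₁ i + 1 ∧ E₁ i ^ 2 ≤ E₂ i ∧
      Summable fun x => (y i x - 1) ^ 2 * p i x := by
    filter_upwards [hp] with i ⟨hp0, hp1, hy2⟩
    have hy1 := summable_mul_of_summable_sq_mul hp0 hp1.summable hy2
    have hD := hasSum_sq_sub_mul hp1 hy1 hy2 1
    exact ⟨by simpa using hD.tsum_eq, sq_tsum_mul_le_tsum_sq_mul hp0 hp1 hy1 hy2, hD.summable⟩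
  -- `D = (E₂ - E₁ ^ 2) + (E₁ - 1) ^ 2`, a sum of two nonnegative terms
  have hmean : Tendsto (fun i => (E₁ i - 1) ^ 2) l (𝓝 0) :=
    squeeze_zero' (Eventually.of_forall fun i => sq_nonneg _)
      (hmom.mono fun i ⟨hDi, hJ, _⟩ => by rw [hDi]; linarith) hD
  refine ⟨?_, ?_, fun ε hε => ?_⟩
  · have h := hmean.sqrt
    simp only [Real.sqrt_sq_eq_abs, Real.sqrt_zero] at h
    exact tendsto_sub_nhds_zero_iff.1 ((tendsto_zero_iff_abs_tendsto_zero _).2 h)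
  · refine ((hD.sub hmean).congr' ?_).trans (by simp)
    filter_upwards [hmom] with i ⟨hDi, _⟩
    rw [hDi]
    ring
  · refine squeeze_zero' ?_ ?_ ((hD.div_const (ε ^ 2)).trans (by simp))
    · filter_upwards [hp] with i ⟨hp0, _⟩
      exact tsum_nonneg fun x => by split_ifs; exacts [hp0 x, le_rfl]
    · filter_upwards [hp, hmom] with i ⟨hp0, _⟩ ⟨_, _, hDi⟩
      exact tsum_ite_le_tsum_sq_sub_mul_div hp0 hε hDi

end Moments

section GeometricDomination

variable {r : ℝ}

theorem tsum_sq_mul_geometric_le (h0 : 0 ≤ r) (h1 : r < 1) :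
    ∑' m : ℕ, (m : ℝ) ^ 2 * r ^ m ≤ 2 / (1 - r) ^ 3 := by
  have hr : ‖r‖ < 1 := by rwa [Real.norm_of_nonneg h0]
  calc ∑' m : ℕ, (m : ℝ) ^ 2 * r ^ m
      ≤ ∑' m : ℕ, 2 * (((m + 2).choose 2 : ℕ) * r ^ m) := by
        refine Summable.tsum_le_tsum (fun m => ?_)
          (summable_pow_mul_geometric_of_norm_lt_one 2 hr)
          ((summable_choose_mul_geometric_of_norm_lt_one 2 hr).mul_left 2)
        rw [Nat.cast_choose_two]
        push_cast
        nlinarith [pow_nonneg h0 m, m.cast_nonneg (α := ℝ)]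
    _ = 2 / (1 - r) ^ 3 := by
        rw [tsum_mul_left, tsum_choose_mul_geometric_of_norm_lt_one 2 hr]
        ring

theorem tsum_sq_mul_geometric_nat_add_le (h0 : 0 ≤ r) (h1 : r < 1) (N : ℕ) :
    ∑' m : ℕ, ((m + N : ℕ) : ℝ) ^ 2 * r ^ (m + N) ≤
      r ^ N * (4 / (1 - r) ^ 3 + 2 * N ^ 2 / (1 - r)) := by
  have hgeom := summable_geometric_of_lt_one h0 h1
  have hsq := summable_pow_mul_geometric_of_norm_lt_one 2 (by rwa [Real.norm_of_nonneg h0])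
  calc ∑' m : ℕ, ((m + N : ℕ) : ℝ) ^ 2 * r ^ (m + N)
      ≤ ∑' m : ℕ, r ^ N * (2 * ((m : ℝ) ^ 2 * r ^ m) + 2 * N ^ 2 * r ^ m) := by
        refine Summable.tsum_le_tsum (fun m => ?_) ((summable_nat_add_iff N).2 hsq)
          (((hsq.mul_left 2).add (hgeom.mul_left _)).mul_left _)
        calc ((m + N : ℕ) : ℝ) ^ 2 * r ^ (m + N) ≤ (2 * m ^ 2 + 2 * N ^ 2) * r ^ (m + N) := by
              gcongr
              push_cast
              nlinarith [sq_nonneg ((m : ℝ) - N)]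
          _ = _ := by ring
    _ = r ^ N * (2 * ∑' m : ℕ, (m : ℝ) ^ 2 * r ^ m + 2 * N ^ 2 / (1 - r)) := by
        rw [tsum_mul_left, (hsq.mul_left 2).tsum_add (hgeom.mul_left _), tsum_mul_left,
          tsum_mul_left, tsum_geometric_of_lt_one h0 h1, div_eq_mul_inv]
    _ ≤ r ^ N * (4 / (1 - r) ^ 3 + 2 * N ^ 2 / (1 - r)) := by
        rw [show (4 : ℝ) / (1 - r) ^ 3 = 2 * (2 / (1 - r) ^ 3) by ring]
        gcongr
        exact tsum_sq_mul_geometric_le h0 h1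

variable {p : ℕ → ℝ}

theorem summable_sq_mul_of_le_geometric (hp : ∀ x, 0 ≤ p x) (hpr : ∀ x, p x ≤ r ^ x)
    (h0 : 0 ≤ r) (h1 : r < 1) : Summable fun x : ℕ => (x : ℝ) ^ 2 * p x :=
  (summable_pow_mul_geometric_of_norm_lt_one 2 (by rwa [Real.norm_of_nonneg h0])).of_nonneg_of_le
    (fun x => mul_nonneg (sq_nonneg _) (hp x))
    (fun x => mul_le_mul_of_nonneg_left (hpr x) (sq_nonneg _))

theorem tsum_sq_mul_le_of_le_geometric (hp : ∀ x, 0 ≤ p x) (hp1 : HasSum p 1)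
    (hpr : ∀ x, p x ≤ r ^ x) (h0 : 0 ≤ r) (h1 : r < 1) (N : ℕ) :
    ∑' x : ℕ, (x : ℝ) ^ 2 * p x ≤
      N ^ 2 + r ^ N * (4 / (1 - r) ^ 3 + 2 * N ^ 2 / (1 - r)) := by
  have hs := summable_sq_mul_of_le_geometric hp hpr h0 h1
  have hhead : ∑ x ∈ range N, (x : ℝ) ^ 2 * p x ≤ N ^ 2 :=
    calc ∑ x ∈ range N, (x : ℝ) ^ 2 * p x ≤ ∑ x ∈ range N, (N : ℝ) ^ 2 * p x := by
          refine sum_le_sum fun x hx => mul_le_mul_of_nonneg_right ?_ (hp x)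
          exact pow_le_pow_left₀ x.cast_nonneg (by exact_mod_cast (mem_range.1 hx).le) 2
      _ ≤ N ^ 2 := by
          rw [← mul_sum]
          exact mul_le_of_le_one_right (sq_nonneg _) (sum_le_hasSum _ (fun x _ => hp x) hp1)
  have htail : ∑' m : ℕ, ((m + N : ℕ) : ℝ) ^ 2 * p (m + N) ≤
      ∑' m : ℕ, ((m + N : ℕ) : ℝ) ^ 2 * r ^ (m + N) :=
    Summable.tsum_le_tsum (fun m => mul_le_mul_of_nonneg_left (hpr _) (sq_nonneg _))
      ((summable_nat_add_iff N).2 hs)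
      ((summable_nat_add_iff (f := fun x : ℕ => (x : ℝ) ^ 2 * r ^ x) N).2
        (summable_pow_mul_geometric_of_norm_lt_one 2 (by rwa [Real.norm_of_nonneg h0])))
  rw [← hs.sum_add_tsum_nat_add N]
  exact add_le_add hhead (htail.trans (tsum_sq_mul_geometric_nat_add_le h0 h1 N))

end GeometricDomination

/-- The distribution function `n ↦ P(X_ρ ≤ n)` of the weights `eulerWeight ρ`. -/
noncomputable def eulerTail (ρ : ℝ) (n : ℕ) : ℝ := ∏' j : ℕ, (1 - ρ ^ (n + 1 + j))

noncomputable def eulerWeight (ρ : ℝ) (x : ℕ) : ℝ := ρ ^ x * eulerTail ρ x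

section EulerTail

variable {ρ : ℝ}

theorem hasSum_pow_add (h0 : 0 ≤ ρ) (h1 : ρ < 1) (m : ℕ) :
    HasSum (fun j : ℕ => ρ ^ (m + j)) (ρ ^ m / (1 - ρ)) := by
  simpa only [pow_add, div_eq_mul_inv] using (hasSum_geometric_of_lt_one h0 h1).mul_left (ρ ^ m)

theorem one_sub_pow_pos_s11 (h0 : 0 ≤ ρ) (h1 : ρ < 1) {k : ℕ} (hk : k ≠ 0) : 0 < 1 - ρ ^ k :=
  sub_pos.2 (pow_lt_one₀ h0 h1 hk)

theorem summable_log_one_sub_pow (h0 : 0 ≤ ρ) (h1 : ρ < 1) (m : ℕ) :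
    Summable fun j : ℕ => log (1 - ρ ^ (m + j)) := by
  simpa only [sub_eq_add_neg] using
    Real.summable_log_one_add_of_summable (hasSum_pow_add h0 h1 m).summable.neg

theorem eulerTail_eq_exp (h0 : 0 ≤ ρ) (h1 : ρ < 1) (n : ℕ) :
    eulerTail ρ n = exp (∑' j : ℕ, log (1 - ρ ^ (n + 1 + j))) :=
  (Real.rexp_tsum_eq_tprod (fun j => one_sub_pow_pos_s11 h0 h1 (by omega))
    (summable_log_one_sub_pow h0 h1 (n + 1))).symm

theorem eulerTail_le_exp (h0 : 0 ≤ ρ) (h1 : ρ < 1) (n : ℕ) :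
    eulerTail ρ n ≤ exp (-(ρ ^ (n + 1) / (1 - ρ))) := by
  rw [eulerTail_eq_exp h0 h1, ← (hasSum_pow_add h0 h1 (n + 1)).neg.tsum_eq, exp_le_exp]
  refine Summable.tsum_le_tsum (fun j => ?_) (summable_log_one_sub_pow h0 h1 (n + 1))
    (hasSum_pow_add h0 h1 (n + 1)).summable.neg
  linarith [log_le_sub_one_of_pos (one_sub_pow_pos_s11 h0 h1 (k := n + 1 + j) (by omega))]

theorem eulerTail_pos (h0 : 0 ≤ ρ) (h1 : ρ < 1) (n : ℕ) : 0 < eulerTail ρ n := by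
  rw [eulerTail_eq_exp h0 h1]
  exact exp_pos _

theorem eulerTail_le_one (h0 : 0 ≤ ρ) (h1 : ρ < 1) (n : ℕ) : eulerTail ρ n ≤ 1 :=
  (eulerTail_le_exp h0 h1 n).trans <| exp_le_one_iff.2 <|
    neg_nonpos.2 (div_nonneg (by positivity) (sub_nonneg.2 h1.le))

theorem eulerTail_eq_mul (h0 : 0 ≤ ρ) (h1 : ρ < 1) (n : ℕ) :
    eulerTail ρ n = (1 - ρ ^ (n + 1)) * eulerTail ρ (n + 1) := by
  have e : (fun j : ℕ => 1 - ρ ^ (n + 1 + (j + 1))) = fun j => 1 - ρ ^ (n + 1 + 1 + j) := by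
    funext j; ring_nf
  have hmul : Multipliable fun j : ℕ => 1 - ρ ^ (n + 1 + 1 + j) :=
    Real.multipliable_of_summable_log (fun j => one_sub_pow_pos_s11 h0 h1 (by omega))
      (summable_log_one_sub_pow h0 h1 (n + 1 + 1))
  rw [eulerTail, tprod_eq_zero_mul' (e ▸ hmul), e, add_zero, eulerTail]

theorem tendsto_eulerTail (h0 : 0 ≤ ρ) (h1 : ρ < 1) :
    Tendsto (eulerTail ρ) atTop (𝓝 1) := by
  have h := ((tendsto_sum_nat_add fun k => log (1 - ρ ^ k)).comp
    (tendsto_add_atTop_nat 1)).rexp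
  rw [exp_zero] at h
  refine h.congr fun n => ?_
  simp only [Function.comp_apply, eulerTail_eq_exp h0 h1, add_comm _ (n + 1)]

theorem sum_range_succ_eulerWeight (h0 : 0 ≤ ρ) (h1 : ρ < 1) (n : ℕ) :
    ∑ x ∈ range (n + 1), eulerWeight ρ x = eulerTail ρ n := by
  induction n with
  | zero => simp [eulerWeight]
  | succ n ih =>
    rw [sum_range_succ, ih, eulerWeight, eulerTail_eq_mul h0 h1 n]
    ring

theorem sum_range_eulerWeight_le (h0 : 0 ≤ ρ) (h1 : ρ < 1) (n : ℕ) :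
    ∑ x ∈ range n, eulerWeight ρ x ≤ exp (-(ρ ^ n / (1 - ρ))) := by
  cases n with
  | zero => simpa using (exp_pos _).le
  | succ n => exact (sum_range_succ_eulerWeight h0 h1 n).trans_le (eulerTail_le_exp h0 h1 n)

theorem eulerWeight_nonneg (h0 : 0 ≤ ρ) (h1 : ρ < 1) (x : ℕ) : 0 ≤ eulerWeight ρ x :=
  mul_nonneg (pow_nonneg h0 x) (eulerTail_pos h0 h1 x).le

theorem eulerWeight_le_pow (h0 : 0 ≤ ρ) (h1 : ρ < 1) (x : ℕ) : eulerWeight ρ x ≤ ρ ^ x :=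
  mul_le_of_le_one_right (pow_nonneg h0 x) (eulerTail_le_one h0 h1 x)

theorem hasSum_eulerWeight (h0 : 0 ≤ ρ) (h1 : ρ < 1) : HasSum (eulerWeight ρ) 1 := by
  rw [hasSum_iff_tendsto_nat_of_nonneg (eulerWeight_nonneg h0 h1), ← tendsto_add_atTop_iff_nat 1]
  simpa only [sum_range_succ_eulerWeight h0 h1] using tendsto_eulerTail h0 h1

theorem summable_sq_mul_eulerWeight (h0 : 0 ≤ ρ) (h1 : ρ < 1) (a : ℝ) :
    Summable fun x : ℕ => (a * x) ^ 2 * eulerWeight ρ x := by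
  simpa only [mul_pow, mul_assoc] using (summable_sq_mul_of_le_geometric
    (eulerWeight_nonneg h0 h1) (eulerWeight_le_pow h0 h1) h0 h1).mul_left (a ^ 2)

end EulerTail

noncomputable def logRatio (ρ : ℝ) : ℝ := log ρ / log (1 - ρ)

section LogRatio

variable {ρ : ℝ}

theorem logRatio_pos (h0 : 0 < ρ) (h1 : ρ < 1) : 0 < logRatio ρ :=
  div_pos_of_neg_of_neg (log_neg h0 h1) (log_neg (by linarith) (by linarith))

theorem one_sub_rpow_logRatio (h0 : 0 < ρ) (h1 : ρ < 1) : (1 - ρ) ^ logRatio ρ = ρ := by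
  have hlog : log (1 - ρ) ≠ 0 := (log_neg (by linarith) (by linarith)).ne
  rw [rpow_def_of_pos (by linarith), logRatio, mul_div_cancel₀ _ hlog, exp_log h0]

theorem pow_eq_one_sub_rpow (h0 : 0 < ρ) (h1 : ρ < 1) (n : ℕ) :
    ρ ^ n = (1 - ρ) ^ (logRatio ρ * n) := by
  rw [rpow_mul (by linarith), one_sub_rpow_logRatio h0 h1, rpow_natCast]

theorem tendsto_one_sub_nhdsLT_one : Tendsto (fun ρ : ℝ => 1 - ρ) (𝓝[<] 1) (𝓝[>] 0) := by
  refine tendsto_nhdsWithin_of_tendsto_nhds_of_eventually_within _ ?_ ?_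
  · exact tendsto_nhdsWithin_of_tendsto_nhds
      (by simpa using (continuous_sub_left (1 : ℝ)).tendsto 1)
  · filter_upwards [self_mem_nhdsWithin] with ρ (h : ρ < 1)
    exact sub_pos.2 h

theorem tendsto_logRatio_div_one_sub :
    Tendsto (fun ρ => logRatio ρ / (1 - ρ)) (𝓝[<] 1) (𝓝 0) := by
  have hinv : Tendsto (fun ρ : ℝ => ρ⁻¹ * (-log (1 - ρ))⁻¹) (𝓝[<] 1) (𝓝 0) := by
    have h := (tendsto_inv_atTop_zero.comp (tendsto_neg_atBot_atTop.comp
      (tendsto_log_nhdsGT_zero.comp tendsto_one_sub_nhdsLT_one)))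
    simpa using ((tendsto_inv₀ one_ne_zero).mono_left nhdsWithin_le_nhds).mul h
  refine squeeze_zero' ?_ ?_ hinv
  · filter_upwards [self_mem_nhdsWithin, (lt_mem_nhds one_pos).filter_mono nhdsWithin_le_nhds]
      with ρ (h1 : ρ < 1) h0
    exact div_nonneg (logRatio_pos h0 h1).le (by linarith)
  · filter_upwards [self_mem_nhdsWithin, (lt_mem_nhds one_pos).filter_mono nhdsWithin_le_nhds]
      with ρ (h1 : ρ < 1) h0
    have hlogρ : -log ρ ≤ ρ⁻¹ - 1 := by simpa using log_le_sub_one_of_pos (inv_pos.2 h0)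
    have hu : 0 < 1 - ρ := by linarith
    calc logRatio ρ / (1 - ρ) = -log ρ / (1 - ρ) * (-log (1 - ρ))⁻¹ := by
          rw [logRatio, div_eq_mul_inv, div_eq_mul_inv, div_eq_mul_inv, inv_neg]
          ring
      _ ≤ ρ⁻¹ * (-log (1 - ρ))⁻¹ := by
          gcongr
          · exact (inv_pos.2 (neg_pos.2 (log_neg hu (by linarith)))).le
          · rw [div_le_iff₀ hu, mul_sub, mul_one, inv_mul_cancel₀ h0.ne']
            exact hlogρ

end LogRatio

section Concentration

variable {ρ δ : ℝ}

theorem eventually_concentration_conditions (hδ : 0 < δ) :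
    ∀ᶠ ρ in 𝓝[<] 1, 0 < ρ ∧ ρ < 1 ∧ logRatio ρ ≤ δ * (1 - ρ) ∧
      (1 - ρ) ^ δ ≤ δ ∧ exp (-(1 - ρ) ^ (-δ)) ≤ δ := by
  have hrpow : Tendsto (fun ρ : ℝ => (1 - ρ) ^ δ) (𝓝[<] 1) (𝓝 0) := by
    have := (continuousAt_rpow_const 0 δ (Or.inr hδ.le)).tendsto
    rw [zero_rpow hδ.ne'] at this
    exact this.comp (tendsto_one_sub_nhdsLT_one.mono_right nhdsWithin_le_nhds)
  have hexp : Tendsto (fun ρ : ℝ => exp (-(1 - ρ) ^ (-δ))) (𝓝[<] 1) (𝓝 0) :=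
    tendsto_exp_atBot.comp (tendsto_neg_atTop_atBot.comp
      ((tendsto_rpow_neg_nhdsGT_zero (neg_lt_zero.2 hδ)).comp tendsto_one_sub_nhdsLT_one))
  filter_upwards [(lt_mem_nhds one_pos).filter_mono nhdsWithin_le_nhds, self_mem_nhdsWithin,
    (tendsto_order.1 tendsto_logRatio_div_one_sub).2 δ hδ, (tendsto_order.1 hrpow).2 δ hδ,
    (tendsto_order.1 hexp).2 δ hδ] with ρ h0 (h1 : ρ < 1) hc hu he
  refine ⟨h0, h1, ?_, hu.le, he.le⟩
  rw [div_lt_iff₀ (by linarith)] at hc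
  exact hc.le

theorem exp_neg_pow_div_one_sub_le (h0 : 0 < ρ) (h1 : ρ < 1) {n : ℕ}
    (hn : logRatio ρ * n ≤ 1 - δ) (hexp : exp (-(1 - ρ) ^ (-δ)) ≤ δ) :
    exp (-(ρ ^ n / (1 - ρ))) ≤ δ := by
  have hu : 0 < 1 - ρ := by linarith
  refine le_trans ?_ hexp
  rw [exp_le_exp, neg_le_neg_iff, pow_eq_one_sub_rpow h0 h1, le_div_iff₀ hu,
    ← rpow_add_one hu.ne', neg_add_eq_sub]
  exact rpow_le_rpow_of_exponent_ge hu (by linarith) hn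

theorem pow_div_one_sub_le (h0 : 0 < ρ) (h1 : ρ < 1) {n : ℕ} (hn : 1 + δ ≤ logRatio ρ * n)
    (hu : (1 - ρ) ^ δ ≤ δ) : ρ ^ n / (1 - ρ) ≤ δ := by
  have hu0 : 0 < 1 - ρ := by linarith
  rw [div_le_iff₀ hu0, pow_eq_one_sub_rpow h0 h1]
  calc (1 - ρ) ^ (logRatio ρ * n) ≤ (1 - ρ) ^ (1 + δ) :=
        rpow_le_rpow_of_exponent_ge hu0 (by linarith) hn
    _ = (1 - ρ) ^ δ * (1 - ρ) := by rw [add_comm, rpow_add_one hu0.ne']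
    _ ≤ δ * (1 - ρ) := by gcongr

theorem one_sub_three_mul_le_tsum_logRatio_mul (h0 : 0 < ρ) (h1 : ρ < 1) (hδ : δ ≤ 1)
    (hc : logRatio ρ ≤ δ) (hexp : exp (-(1 - ρ) ^ (-δ)) ≤ δ) :
    1 - 3 * δ ≤ ∑' x : ℕ, logRatio ρ * x * eulerWeight ρ x := by
  set c := logRatio ρ
  have hc0 : 0 < c := logRatio_pos h0 h1
  have hw0 := eulerWeight_nonneg h0.le h1
  have hw1 := hasSum_eulerWeight h0.le h1
  set M := ⌊(1 - δ) / c⌋₊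
  have hcM : c * M ≤ 1 - δ := by
    have := Nat.floor_le (a := (1 - δ) / c) (div_nonneg (by linarith) hc0.le)
    rwa [le_div_iff₀ hc0, mul_comm] at this
  have hcM' : 1 - 2 * δ ≤ c * M := by
    have := Nat.lt_floor_add_one ((1 - δ) / c)
    rw [div_lt_iff₀ hc0] at this
    nlinarith
  have hlow : ∑ x ∈ range M, eulerWeight ρ x ≤ δ :=
    (sum_range_eulerWeight_le h0.le h1 M).trans (exp_neg_pow_div_one_sub_le h0 h1 hcM hexp)
  have hsum : Summable fun x : ℕ => (x : ℝ) * eulerWeight ρ x :=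
    summable_mul_of_summable_sq_mul hw0 hw1.summable
      (summable_sq_mul_of_le_geometric hw0 (eulerWeight_le_pow h0.le h1) h0.le h1)
  calc 1 - 3 * δ ≤ c * M * (1 - δ) := by
        nlinarith [mul_le_mul_of_nonneg_right hcM' (by linarith : (0 : ℝ) ≤ 1 - δ)]
    _ ≤ c * (M * (1 - ∑ x ∈ range M, eulerWeight ρ x)) := by
        rw [← mul_assoc]
        gcongr
    _ ≤ c * ∑' x : ℕ, (x : ℝ) * eulerWeight ρ x := by
        gcongr
        exact mul_one_sub_sum_range_le_tsum hw0 hw1 hsum M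
    _ = ∑' x : ℕ, c * x * eulerWeight ρ x := by
        rw [← tsum_mul_left]
        simp only [mul_assoc]

theorem tsum_sq_logRatio_mul_le (h0 : 0 < ρ) (h1 : ρ < 1) (hδ : δ ≤ 1)
    (hc : logRatio ρ ≤ δ * (1 - ρ)) (hu : (1 - ρ) ^ δ ≤ δ) :
    ∑' x : ℕ, (logRatio ρ * x) ^ 2 * eulerWeight ρ x ≤ 1 + 30 * δ := by
  set c := logRatio ρ
  have hc0 : 0 < c := logRatio_pos h0 h1
  have hu0 : 0 < 1 - ρ := by linarith
  have hδ0 : 0 < δ := (rpow_pos_of_pos hu0 δ).trans_le hu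
  have hcu : c / (1 - ρ) ≤ 1 := by
    rw [div_le_one hu0]; nlinarith
  set N := ⌈(1 + δ) / c⌉₊
  have hcN : 1 + δ ≤ c * N := by
    have := Nat.le_ceil ((1 + δ) / c)
    rwa [div_le_iff₀ hc0, mul_comm] at this
  have hcN' : c * N ≤ 1 + 2 * δ := by
    have := Nat.ceil_lt_add_one (a := (1 + δ) / c) (div_nonneg (by linarith) hc0.le)
    rw [← sub_lt_iff_lt_add, lt_div_iff₀ hc0] at this
    nlinarith
  have hρN := pow_div_one_sub_le h0 h1 hcN hu
  have h := tsum_sq_mul_le_of_le_geometric (eulerWeight_nonneg h0.le h1)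
    (hasSum_eulerWeight h0.le h1) (eulerWeight_le_pow h0.le h1) h0.le h1 N
  calc ∑' x : ℕ, (c * x) ^ 2 * eulerWeight ρ x
        = c ^ 2 * ∑' x : ℕ, (x : ℝ) ^ 2 * eulerWeight ρ x := by
        rw [← tsum_mul_left]
        simp only [mul_pow, mul_assoc]
    _ ≤ c ^ 2 * (N ^ 2 + ρ ^ N * (4 / (1 - ρ) ^ 3 + 2 * N ^ 2 / (1 - ρ))) := by gcongr
    _ = (c * N) ^ 2 + 4 * (c / (1 - ρ)) ^ 2 * (ρ ^ N / (1 - ρ)) +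
          2 * (c * N) ^ 2 * (ρ ^ N / (1 - ρ)) := by
        field_simp
        ring
    _ ≤ (1 + 2 * δ) ^ 2 + 4 * 1 ^ 2 * δ + 2 * (1 + 2 * δ) ^ 2 * δ := by
        gcongr
    _ ≤ 1 + 30 * δ := by
        nlinarith [mul_le_mul_of_nonneg_left hδ hδ0.le,
          mul_le_mul_of_nonneg_left hδ (sq_nonneg δ)]

theorem tsum_sq_logRatio_mul_sub_one_le (h0 : 0 < ρ) (h1 : ρ < 1) (hδ : δ ≤ 1)
    (hc : logRatio ρ ≤ δ * (1 - ρ)) (hu : (1 - ρ) ^ δ ≤ δ)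
    (hexp : exp (-(1 - ρ) ^ (-δ)) ≤ δ) :
    ∑' x : ℕ, (logRatio ρ * x - 1) ^ 2 * eulerWeight ρ x ≤ 36 * δ := by
  have hw0 := eulerWeight_nonneg h0.le h1
  have hw1 := hasSum_eulerWeight h0.le h1
  have hy2 := summable_sq_mul_eulerWeight h0.le h1 (logRatio ρ)
  have hy1 := summable_mul_of_summable_sq_mul hw0 hw1.summable hy2
  have hδ0 : 0 < δ := (rpow_pos_of_pos (by linarith) δ).trans_le hu
  have hcδ : logRatio ρ ≤ δ := hc.trans (mul_le_of_le_one_right hδ0.le (by linarith))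
  rw [(hasSum_sq_sub_mul hw1 hy1 hy2 1).tsum_eq]
  linarith [tsum_sq_logRatio_mul_le h0 h1 hδ hc hu,
    one_sub_three_mul_le_tsum_logRatio_mul h0 h1 hδ hcδ hexp]

theorem tendsto_tsum_sq_logRatio_mul_sub_one :
    Tendsto (fun ρ => ∑' x : ℕ, (logRatio ρ * x - 1) ^ 2 * eulerWeight ρ x)
      (𝓝[<] 1) (𝓝 0) := by
  rw [Metric.tendsto_nhds]
  intro ε hε
  filter_upwards [eventually_concentration_conditions (by positivity : 0 < min 1 (ε / 72))]
    with ρ ⟨h0, h1, hc, hu, hexp⟩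
  have hD := tsum_sq_logRatio_mul_sub_one_le h0 h1 (min_le_left _ _) hc hu hexp
  rw [Real.dist_0_eq_abs, abs_of_nonneg (tsum_nonneg fun x =>
    mul_nonneg (sq_nonneg _) (eulerWeight_nonneg h0.le h1 x))]
  linarith [min_le_right 1 (ε / 72)]

end Concentration

theorem scaled_convergence_in_probability
    (f : ℝ → ℕ → ℝ)
    (hf : ∀ ρ x, f ρ x = ρ ^ x * ∏' j : ℕ, (1 - ρ ^ (x + 1 + j)))
    (c : ℝ → ℝ) (hc : ∀ ρ, c ρ = Real.log ρ / Real.log (1 - ρ)) :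
    Tendsto (fun ρ => ∑' x : ℕ, (c ρ * x) * f ρ x)
      (nhdsWithin 1 (Set.Iio 1)) (nhds 1) ∧
    Tendsto (fun ρ =>
        (∑' x : ℕ, (c ρ * x) ^ 2 * f ρ x) - (∑' x : ℕ, (c ρ * x) * f ρ x) ^ 2)
      (nhdsWithin 1 (Set.Iio 1)) (nhds 0) ∧
    ∀ ε : ℝ, 0 < ε →
      Tendsto (fun ρ => ∑' x : ℕ, if ε < |c ρ * x - 1| then f ρ x else 0)
        (nhdsWithin 1 (Set.Iio 1)) (nhds 0) := by
  obtain rfl : f = eulerWeight := funext fun ρ => funext (hf ρ)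
  obtain rfl : c = logRatio := funext hc
  refine tendsto_moments_of_tendsto_tsum_sq_sub_one ?_ tendsto_tsum_sq_logRatio_mul_sub_one
  filter_upwards [(lt_mem_nhds one_pos).filter_mono nhdsWithin_le_nhds, self_mem_nhdsWithin]
    with ρ h0 (h1 : ρ < 1)
  exact ⟨eulerWeight_nonneg h0.le h1, hasSum_eulerWeight h0.le h1,
    summable_sq_mul_eulerWeight h0.le h1 _⟩
end

section
/- For every real z > 0, lim_{ρ→1⁻} (ρ;ρ)_∞ / (z^{ln ρ / ln(1-ρ)} ρ ; ρ)_∞ = z, where (a;ρ)_∞ = ∏_{j=0}^∞ (1 - a ρ^j). -/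
open Filter Set

/-! Let `Φ s = log (ρ ^ s; ρ)_∞ = ∑ⱼ log (1 - ρ ^ (s + j))`. Each term is concave in `s`, so `Φ` is
concave on `(0, ∞)`, and `Φ s = log (1 - ρ ^ s) + Φ (s + 1)`. Since `z ^ (log ρ / log (1 - ρ)) = ρ ^ x`
with `x = log z / log (1 - ρ)`, the ratio equals `exp (Φ 1 - Φ (1 + x))`, while
`x (Φ 2 - Φ 1) = -x log (1 - ρ) = -log z`. Comparing the secant slope of `Φ` over `[1, 1 + x]` with
those over `[1, 2]` and `[2, 2 + x]`, and bounding `1 - ρ ^ (1 + x)` against `(1 + x)(1 - ρ)` by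
Bernoulli's inequality, traps `Φ (1 + x) - Φ 1 - x (Φ 2 - Φ 1)` between `0` and `log (1 + x)`.
As `ρ → 1⁻` we have `x → 0`, so the ratio tends to `exp (log z) = z`. -/

open Real

theorem ConcaveOn.log_comp {E : Type*} [AddCommMonoid E] [Module ℝ E] {s : Set E} {f : E → ℝ}
    (hf : ConcaveOn ℝ s f) (hpos : ∀ x ∈ s, 0 < f x) : ConcaveOn ℝ s (fun x => log (f x)) := by
  refine ⟨hf.1, fun x hx y hy a b ha hb hab => ?_⟩
  exact (strictConcaveOn_log_Ioi.concaveOn.2 (hpos x hx) (hpos y hy) ha hb hab).trans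
    (log_le_log (convex_Ioi (0 : ℝ) (hpos x hx) (hpos y hy) ha hb hab) (hf.2 hx hy ha hb hab))

theorem ConcaveOn.tsum {ι E : Type*} [AddCommMonoid E] [Module ℝ E] {s : Set E}
    {f : ι → E → ℝ} (hs : Convex ℝ s) (hf : ∀ i, ConcaveOn ℝ s (f i))
    (hsum : ∀ x ∈ s, Summable fun i => f i x) : ConcaveOn ℝ s (fun x => ∑' i, f i x) := by
  refine ⟨hs, fun x hx y hy a b ha hb hab => ?_⟩
  have hxy := hs hx hy ha hb hab
  calc a • ∑' i, f i x + b • ∑' i, f i y = ∑' i, (a • f i x + b • f i y) := by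
        simp only [smul_eq_mul, ← tsum_mul_left]
        exact ((hsum x hx).mul_left a).tsum_add ((hsum y hy).mul_left b) |>.symm
    _ ≤ ∑' i, f i (a • x + b • y) :=
        (((hsum x hx).mul_left a).add ((hsum y hy).mul_left b)).tsum_le_tsum
          (fun i => (hf i).2 hx hy ha hb hab) (hsum _ hxy)

theorem ConcaveOn.sub_mul_add_sub_mul_le {𝕜 : Type*} [Field 𝕜] [LinearOrder 𝕜]
    [IsStrictOrderedRing 𝕜] {s : Set 𝕜} {f : 𝕜 → 𝕜} (hf : ConcaveOn 𝕜 s f) {p q r : 𝕜}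
    (hp : p ∈ s) (hr : r ∈ s) (hpq : p ≤ q) (hqr : q ≤ r) :
    (r - q) * f p + (q - p) * f r ≤ (r - p) * f q := by
  rcases hpq.eq_or_lt with rfl | hpq
  · ring_nf; rfl
  rcases hqr.eq_or_lt with rfl | hqr
  · ring_nf; rfl
  have := hf.neg.secant_mono_aux1 hp hr hpq hqr
  simp only [Pi.neg_apply] at this
  linarith

noncomputable def logQPochhammer (ρ s : ℝ) : ℝ := ∑' j : ℕ, log (1 - ρ ^ s * ρ ^ j)

section logQPochhammer

variable {ρ : ℝ}

theorem summable_log_one_sub_rpow_mul_pow (hρ0 : 0 ≤ ρ) (hρ1 : ρ < 1) (s : ℝ) :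
    Summable fun j : ℕ => log (1 - ρ ^ s * ρ ^ j) := by
  simpa only [sub_eq_add_neg] using Real.summable_log_one_add_of_summable
    ((summable_geometric_of_lt_one hρ0 hρ1).mul_left (ρ ^ s)).neg

theorem one_sub_rpow_mul_pow_pos (hρ0 : 0 < ρ) (hρ1 : ρ < 1) {s : ℝ} (hs : 0 < s) (j : ℕ) :
    0 < 1 - ρ ^ s * ρ ^ j := by
  have : ρ ^ s * ρ ^ j < 1 :=
    mul_lt_one_of_nonneg_of_lt_one_left (rpow_nonneg hρ0.le s) (rpow_lt_one hρ0.le hρ1 hs)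
      (pow_le_one₀ hρ0.le hρ1.le)
  linarith

theorem logQPochhammer_eq_log_add (hρ0 : 0 < ρ) (hρ1 : ρ < 1) (s : ℝ) :
    logQPochhammer ρ s = log (1 - ρ ^ s) + logQPochhammer ρ (s + 1) := by
  rw [logQPochhammer, (summable_log_one_sub_rpow_mul_pow hρ0.le hρ1 s).tsum_eq_zero_add]
  simp only [pow_zero, mul_one, pow_succ, rpow_add_one hρ0.ne', logQPochhammer, mul_assoc,
    mul_comm ρ]

theorem exp_logQPochhammer (hρ0 : 0 < ρ) (hρ1 : ρ < 1) {s : ℝ} (hs : 0 < s) :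
    exp (logQPochhammer ρ s) = ∏' j : ℕ, (1 - ρ ^ s * ρ ^ j) :=
  rexp_tsum_eq_tprod (one_sub_rpow_mul_pow_pos hρ0 hρ1 hs)
    (summable_log_one_sub_rpow_mul_pow hρ0.le hρ1 s)

theorem concaveOn_logQPochhammer (hρ0 : 0 < ρ) (hρ1 : ρ < 1) :
    ConcaveOn ℝ (Ioi 0) (logQPochhammer ρ) := by
  refine ConcaveOn.tsum (convex_Ioi 0) (fun j => ConcaveOn.log_comp ?_ ?_)
    (fun s _ => summable_log_one_sub_rpow_mul_pow hρ0.le hρ1 s)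
  · have := (((convexOn_rpow_left hρ0).smul (pow_nonneg hρ0.le j)).neg.add_const 1).subset
      (subset_univ _) (convex_Ioi 0)
    exact this.congr fun s _ => by
      simp only [Pi.add_apply, Pi.neg_apply, smul_eq_mul]
      ring
  · exact fun s hs => one_sub_rpow_mul_pow_pos hρ0 hρ1 hs j

theorem abs_logQPochhammer_sub_le (hρ0 : 0 < ρ) (hρ1 : ρ < 1) {x : ℝ} (hx0 : -1 < x)
    (hx1 : x ≤ 1) :
    |logQPochhammer ρ (x + 1) - logQPochhammer ρ 1 + x * log (1 - ρ)| ≤ |log (x + 1)| := by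
  have hΦ := concaveOn_logQPochhammer hρ0 hρ1
  have h1 := logQPochhammer_eq_log_add hρ0 hρ1 1
  have h2 := logQPochhammer_eq_log_add hρ0 hρ1 (x + 1)
  rw [rpow_one, one_add_one_eq_two] at h1
  rw [add_assoc, one_add_one_eq_two] at h2
  have hlog : log ((x + 1) * (1 - ρ)) = log (x + 1) + log (1 - ρ) :=
    log_mul (by linarith) (by linarith)
  have hbase : 0 < 1 - ρ ^ (x + 1) := by
    have := rpow_lt_one hρ0.le hρ1 (by linarith : 0 < x + 1)
    linarith
  rcases le_or_gt 0 x with hx | hx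
  · have c1 := hΦ.sub_mul_add_sub_mul_le (p := 1) (q := x + 1) (r := 2) (by norm_num)
      (by norm_num) (by linarith) (by linarith)
    have c2 := hΦ.sub_mul_add_sub_mul_le (p := 1) (q := 2) (r := x + 2) (by norm_num)
      (show (0 : ℝ) < x + 2 by linarith) (by norm_num) (by linarith)
    have hB : 1 + (x + 1) * (ρ - 1) ≤ ρ ^ (x + 1) := by
      simpa using one_add_mul_self_le_rpow_one_add (s := ρ - 1) (by linarith)
        (p := x + 1) (by linarith)
    have hB' := log_le_log hbase (show 1 - ρ ^ (x + 1) ≤ (x + 1) * (1 - ρ) by linarith)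
    exact abs_le_abs_of_nonneg (by nlinarith) (by nlinarith)
  · have c1 := hΦ.sub_mul_add_sub_mul_le (p := x + 1) (q := 1) (r := 2)
      (show (0 : ℝ) < x + 1 by linarith) (by norm_num) (by linarith) (by norm_num)
    have c2 := hΦ.sub_mul_add_sub_mul_le (p := 1) (q := x + 2) (r := 2) (by norm_num)
      (by norm_num) (by linarith) (by linarith)
    have hB : ρ ^ (x + 1) ≤ 1 + (x + 1) * (ρ - 1) := by
      simpa using rpow_one_add_le_one_add_mul_self (s := ρ - 1) (by linarith)
        (p := x + 1) (by linarith) (by linarith)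
    have hB' := log_le_log (by nlinarith) (show (x + 1) * (1 - ρ) ≤ 1 - ρ ^ (x + 1) by linarith)
    exact abs_le_abs_of_nonpos (by nlinarith) (by nlinarith)

end logQPochhammer

theorem qPochhammer_ratio_eq_exp {ρ x : ℝ} (hρ0 : 0 < ρ) (hρ1 : ρ < 1) (hx : -1 < x) :
    (∏' j : ℕ, (1 - ρ ^ (j + 1))) / ∏' j : ℕ, (1 - ρ ^ x * ρ ^ (j + 1)) =
      exp (logQPochhammer ρ 1 - logQPochhammer ρ (x + 1)) := by
  rw [exp_sub, exp_logQPochhammer hρ0 hρ1 one_pos,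
    exp_logQPochhammer hρ0 hρ1 (by linarith : 0 < x + 1)]
  congr 1 <;> refine tprod_congr fun j => ?_
  · rw [rpow_one, pow_succ, mul_comm]
  · rw [rpow_add_one hρ0.ne', pow_succ]
    ring

theorem tendsto_log_one_sub_nhdsLT_one :
    Tendsto (fun ρ => log (1 - ρ)) (nhdsWithin 1 (Iio 1)) atBot := by
  refine tendsto_log_nhdsGT_zero.comp (tendsto_nhdsWithin_iff.2 ⟨?_, ?_⟩)
  · simpa using ((tendsto_const_nhds (x := (1 : ℝ))).sub (tendsto_id (x := nhds 1))).mono_left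
      nhdsWithin_le_nhds
  · exact eventually_nhdsWithin_of_forall fun ρ (hρ : ρ < 1) => sub_pos.2 hρ

theorem qPochhammer_limit (z : ℝ) (hz : 0 < z) :
    Tendsto
      (fun ρ : ℝ =>
        (∏' j : ℕ, (1 - ρ ^ (j + 1))) /
          ∏' j : ℕ, (1 - z ^ (Real.log ρ / Real.log (1 - ρ)) * ρ ^ (j + 1)))
      (nhdsWithin 1 (Set.Iio 1)) (nhds z) := by
  set x : ℝ → ℝ := fun ρ => log z / log (1 - ρ)
  set E : ℝ → ℝ := fun ρ =>
    logQPochhammer ρ (x ρ + 1) - logQPochhammer ρ 1 + x ρ * log (1 - ρ)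
  have hx : Tendsto x (nhdsWithin 1 (Iio 1)) (nhds 0) :=
    tendsto_const_nhds.div_atBot tendsto_log_one_sub_nhdsLT_one
  have hρ : ∀ᶠ ρ : ℝ in nhdsWithin 1 (Iio 1), ρ ∈ Ioo 0 1 := Ioo_mem_nhdsLT one_pos
  have hxρ : ∀ᶠ ρ in nhdsWithin 1 (Iio 1), x ρ ∈ Ioc (-1) 1 :=
    hx.eventually (Ioc_mem_nhds (by norm_num) one_pos)
  have hE : Tendsto E (nhdsWithin 1 (Iio 1)) (nhds 0) := by
    have hlog : Tendsto (fun ρ => log (x ρ + 1)) (nhdsWithin 1 (Iio 1)) (nhds 0) := by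
      simpa using (hx.add_const 1).log (by norm_num)
    refine squeeze_zero_norm' ?_ (by simpa using hlog.abs)
    filter_upwards [hρ, hxρ] with ρ ⟨hρ0, hρ1⟩ ⟨hx0, hx1⟩
    exact abs_logQPochhammer_sub_le hρ0 hρ1 hx0 hx1
  have hratio : ∀ᶠ ρ in nhdsWithin 1 (Iio 1), z * exp (-E ρ) =
      (∏' j : ℕ, (1 - ρ ^ (j + 1))) /
        ∏' j : ℕ, (1 - z ^ (Real.log ρ / Real.log (1 - ρ)) * ρ ^ (j + 1)) := by
    filter_upwards [hρ, hxρ] with ρ ⟨hρ0, hρ1⟩ ⟨hx0, _⟩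
    have hzρ : z ^ (log ρ / log (1 - ρ)) = ρ ^ x ρ := by
      rw [rpow_def_of_pos hz, rpow_def_of_pos hρ0, mul_div_left_comm]
    have hxlog : x ρ * log (1 - ρ) = log z :=
      div_mul_cancel₀ _ (log_neg (by linarith) (by linarith)).ne
    rw [hzρ, qPochhammer_ratio_eq_exp hρ0 hρ1 hx0, ← exp_log hz, ← exp_add]
    congr 1
    linarith
  have hlim := (tendsto_const_nhds (x := z)).mul hE.neg.rexp
  rw [neg_zero, exp_zero, mul_one] at hlim
  exact hlim.congr' hratio
end

section
/- Let ρ ∈ (0,1), δ > 0, m ∈ ℕ, and Z_ρ = ln(1-ρ)/ln ρ. Then ∑_{x=1}^∞ (Z_ρ(1+δ) + x)^m ρ^x is asymptotically equivalent to Z_ρ^m (1+δ)^m / (1-ρ) as ρ → 1⁻. -/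
/-!
With `A = Z_ρ (1 + δ)`, each term satisfies `A^m ≤ (A + n)^m ≤ A^m e^{mn/A}`, so the sum is squeezed
between the geometric sums `A^m ρ / (1 - ρ)` and `A^m r / (1 - r)` with `r = ρ e^{m/A}`.
Normalised by `A^m / (1 - ρ)`, the upper bound tends to `1` because `e^{m/A} - 1 = O(1/A)` is
`o(1 - ρ)`, i.e. because `A (1 - ρ) → ∞`; for `A = Z_ρ (1 + δ)` this follows from
`-log ρ ≤ (1 - ρ) / ρ` and `log (1 - ρ) → -∞`.
-/

open Filter Set Topology Real

noncomputable def shiftedMomentSum (m : ℕ) (A ρ : ℝ) : ℝ :=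
  ∑' x : ℕ, (A + ((x : ℝ) + 1)) ^ m * ρ ^ (x + 1)

lemma hasSum_mul_pow_succ {r : ℝ} (c : ℝ) (h₀ : 0 ≤ r) (h₁ : r < 1) :
    HasSum (fun x : ℕ => c * r ^ (x + 1)) (c * r / (1 - r)) := by
  simpa only [mul_assoc, ← pow_succ', div_eq_mul_inv] using
    (hasSum_geometric_of_lt_one h₀ h₁).mul_left (c * r)

lemma exp_sub_one_le_mul_exp (ε : ℝ) : exp ε - 1 ≤ ε * exp ε := by
  have h := mul_le_mul_of_nonneg_right (add_one_le_exp (-ε)) (exp_pos ε).le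
  rw [← exp_add, neg_add_cancel, exp_zero] at h
  linarith

lemma add_pow_le_pow_mul_exp_div_pow {A : ℝ} (hA : 0 < A) (m n : ℕ) :
    (A + n) ^ m ≤ A ^ m * exp (m / A) ^ n := by
  have h : A + n ≤ A * exp (n / A) := by
    calc A + n = A * (n / A + 1) := by field_simp; ring
      _ ≤ A * exp (n / A) := by gcongr; exact add_one_le_exp _
  calc (A + n) ^ m ≤ (A * exp (n / A)) ^ m := by gcongr
    _ = A ^ m * exp (m / A) ^ n := by
      rw [mul_pow, ← exp_nat_mul, ← exp_nat_mul]; ring_nf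

section Bounds

variable {A ρ : ℝ} {m : ℕ}

lemma shiftedMomentSum_term_le (hA : 0 < A) (hρ : 0 ≤ ρ) (x : ℕ) :
    (A + ((x : ℝ) + 1)) ^ m * ρ ^ (x + 1) ≤ A ^ m * (ρ * exp (m / A)) ^ (x + 1) := by
  have h := add_pow_le_pow_mul_exp_div_pow hA m (x + 1)
  push_cast at h
  calc (A + ((x : ℝ) + 1)) ^ m * ρ ^ (x + 1) ≤ A ^ m * exp (m / A) ^ (x + 1) * ρ ^ (x + 1) := by
        gcongr
    _ = A ^ m * (ρ * exp (m / A)) ^ (x + 1) := by ring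

lemma summable_shiftedMomentSum (hA : 0 < A) (hρ : 0 ≤ ρ) (hr : ρ * exp (m / A) < 1) :
    Summable (fun x : ℕ => (A + ((x : ℝ) + 1)) ^ m * ρ ^ (x + 1)) :=
  Summable.of_nonneg_of_le (fun x => by positivity) (shiftedMomentSum_term_le hA hρ)
    (hasSum_mul_pow_succ _ (by positivity) hr).summable

lemma le_shiftedMomentSum_div (hA : 0 < A) (hρ : ρ ∈ Ioo 0 1) (hr : ρ * exp (m / A) < 1) :
    ρ ≤ shiftedMomentSum m A ρ / (A ^ m / (1 - ρ)) := by
  obtain ⟨hρ0, hρ1⟩ := hρ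
  have h1ρ : 0 < 1 - ρ := sub_pos.2 hρ1
  have hlow : A ^ m * ρ / (1 - ρ) ≤ shiftedMomentSum m A ρ :=
    hasSum_le (fun x => by gcongr; linarith)
      (hasSum_mul_pow_succ _ hρ0.le hρ1) (summable_shiftedMomentSum hA hρ0.le hr).hasSum
  rw [le_div_iff₀ (by positivity)]
  linarith [show ρ * (A ^ m / (1 - ρ)) = A ^ m * ρ / (1 - ρ) by ring]

lemma shiftedMomentSum_div_le (hA : 0 < A) (hρ : ρ ∈ Ioo 0 1) (hr : ρ * exp (m / A) < 1) :
    shiftedMomentSum m A ρ / (A ^ m / (1 - ρ)) ≤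
      ρ * exp (m / A) / ((1 - ρ * exp (m / A)) / (1 - ρ)) := by
  obtain ⟨hρ0, hρ1⟩ := hρ
  have h1ρ : 0 < 1 - ρ := sub_pos.2 hρ1
  have h1r : 0 < 1 - ρ * exp (m / A) := sub_pos.2 hr
  have hup : shiftedMomentSum m A ρ ≤ A ^ m * (ρ * exp (m / A)) / (1 - ρ * exp (m / A)) :=
    hasSum_le (shiftedMomentSum_term_le hA hρ0.le)
      (summable_shiftedMomentSum hA hρ0.le hr).hasSum (hasSum_mul_pow_succ _ (by positivity) hr)
  rw [div_le_iff₀ (by positivity)]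
  refine hup.trans_eq ?_
  field_simp

end Bounds

lemma tendsto_exp_sub_one_div {α : Type*} {l : Filter α} {ε d : α → ℝ}
    (hε₀ : ∀ᶠ a in l, 0 ≤ ε a) (hd : ∀ᶠ a in l, 0 < d a) (hε : Tendsto ε l (𝓝 0))
    (hεd : Tendsto (fun a => ε a / d a) l (𝓝 0)) :
    Tendsto (fun a => (exp (ε a) - 1) / d a) l (𝓝 0) := by
  have hbound : Tendsto (fun a => ε a / d a * exp (ε a)) l (𝓝 0) := by
    simpa using hεd.mul ((continuous_exp.tendsto 0).comp hε)
  refine tendsto_of_tendsto_of_tendsto_of_le_of_le' tendsto_const_nhds hbound ?_ ?_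
  · filter_upwards [hε₀, hd] with a hεa hda
    exact div_nonneg (sub_nonneg.2 (one_le_exp hεa)) hda.le
  · filter_upwards [hd] with a hda
    calc (exp (ε a) - 1) / d a ≤ ε a * exp (ε a) / d a := by
          gcongr; exact exp_sub_one_le_mul_exp _
      _ = ε a / d a * exp (ε a) := by ring

theorem tendsto_shiftedMomentSum_div {α : Type*} {l : Filter α} {A ρ : α → ℝ} (m : ℕ)
    (hρ : Tendsto ρ l (𝓝 1)) (hρ01 : ∀ᶠ a in l, ρ a ∈ Ioo 0 1)
    (hA : Tendsto (fun a => A a * (1 - ρ a)) l atTop) :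
    Tendsto (fun a => shiftedMomentSum m (A a) (ρ a) / (A a ^ m / (1 - ρ a))) l (𝓝 1) := by
  have hApos : ∀ᶠ a in l, 0 < A a := by
    filter_upwards [hA.eventually_gt_atTop 0, hρ01] with a ha hρa
    exact pos_of_mul_pos_left ha (sub_pos.2 hρa.2).le
  have hAtop : Tendsto A l atTop := by
    refine tendsto_atTop_mono' l ?_ hA
    filter_upwards [hApos, hρ01] with a ha hρa
    nlinarith [hρa.1]
  have hexp : Tendsto (fun a => exp (m / A a)) l (𝓝 1) := by
    simpa [Function.comp_def] using
      (continuous_exp.tendsto 0).comp (tendsto_const_nhds.div_atTop hAtop)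
  have hslope : Tendsto (fun a => (exp (m / A a) - 1) / (1 - ρ a)) l (𝓝 0) := by
    refine tendsto_exp_sub_one_div ?_ ?_ (tendsto_const_nhds.div_atTop hAtop) ?_
    · filter_upwards [hApos] with a ha using div_nonneg (Nat.cast_nonneg m) ha.le
    · filter_upwards [hρ01] with a hρa using sub_pos.2 hρa.2
    · simpa only [div_div] using tendsto_const_nhds.div_atTop hA
  -- `(1 - ρ e^{m/A}) / (1 - ρ) = 1 - ρ (e^{m/A} - 1) / (1 - ρ)`
  have hgap : Tendsto (fun a => (1 - ρ a * exp (m / A a)) / (1 - ρ a)) l (𝓝 1) := by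
    have h := (tendsto_const_nhds (x := (1 : ℝ))).sub (hρ.mul hslope)
    rw [mul_zero, sub_zero] at h
    refine h.congr' ?_
    filter_upwards [hρ01] with a hρa
    have h1ρ : 1 - ρ a ≠ 0 := (sub_pos.2 hρa.2).ne'
    field_simp
    ring
  have hr : ∀ᶠ a in l, ρ a * exp (m / A a) < 1 := by
    filter_upwards [hgap.eventually (lt_mem_nhds one_pos), hρ01] with a hpos hρa
    have := (div_pos_iff_of_pos_right (sub_pos.2 hρa.2)).1 hpos
    linarith
  have hupper : Tendsto (fun a => ρ a * exp (m / A a) / ((1 - ρ a * exp (m / A a)) / (1 - ρ a)))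
      l (𝓝 1) := by
    simpa [Pi.div_def] using (hρ.mul hexp).div hgap one_ne_zero
  refine tendsto_of_tendsto_of_tendsto_of_le_of_le' hρ hupper ?_ ?_
  · filter_upwards [hApos, hρ01, hr] with a ha hρa hra using le_shiftedMomentSum_div ha hρa hra
  · filter_upwards [hApos, hρ01, hr] with a ha hρa hra using shiftedMomentSum_div_le ha hρa hra

lemma tendsto_log_one_sub_div_log_mul_one_sub :
    Tendsto (fun ρ : ℝ => log (1 - ρ) / log ρ * (1 - ρ)) (𝓝[<] 1) atTop := by
  have hlog : Tendsto (fun ρ : ℝ => -log (1 - ρ)) (𝓝[<] 1) atTop := by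
    have h1 : Tendsto (fun ρ : ℝ => 1 - ρ) (𝓝[<] 1) (𝓝[>] 0) := by
      have h := (map_subLeft_nhdsLT (c := (1 : ℝ)) (a := 1)).le
      rwa [sub_self] at h
    exact tendsto_neg_atBot_atTop.comp (tendsto_log_nhdsGT_zero.comp h1)
  refine tendsto_atTop_mono' _ ?_
    ((tendsto_nhdsWithin_of_tendsto_nhds tendsto_id).pos_mul_atTop one_pos hlog)
  filter_upwards [Ioo_mem_nhdsLT one_pos] with ρ ⟨hρ0, hρ1⟩
  have hlogρ : ρ * -log ρ ≤ 1 - ρ := by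
    have h := mul_le_mul_of_nonneg_left (one_sub_inv_le_log_of_pos hρ0) hρ0.le
    rw [mul_sub, mul_inv_cancel₀ hρ0.ne'] at h
    linarith
  have hlog1 : 0 ≤ -log (1 - ρ) := neg_nonneg.2 (log_nonpos (by linarith) (by linarith))
  rw [id, div_mul_eq_mul_div, le_div_iff_of_neg (log_neg hρ0 hρ1)]
  nlinarith [mul_le_mul_of_nonneg_left hlogρ hlog1]

theorem shifted_moment_sum_asymptotic (δ : ℝ) (hδ : 0 < δ) (m : ℕ) :
    Tendsto
      (fun ρ : ℝ =>
        (∑' x : ℕ,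
            (Real.log (1 - ρ) / Real.log ρ * (1 + δ) + ((x : ℝ) + 1)) ^ m * ρ ^ (x + 1)) /
          ((Real.log (1 - ρ) / Real.log ρ) ^ m * (1 + δ) ^ m / (1 - ρ)))
      (nhdsWithin 1 (Set.Iio 1)) (nhds 1) := by
  have hA : Tendsto (fun ρ : ℝ => log (1 - ρ) / log ρ * (1 + δ) * (1 - ρ)) (𝓝[<] 1) atTop := by
    simpa only [mul_right_comm] using
      tendsto_log_one_sub_div_log_mul_one_sub.atTop_mul_const (by linarith : (0 : ℝ) < 1 + δ)
  simpa only [shiftedMomentSum, mul_pow, id] using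
    tendsto_shiftedMomentSum_div m (tendsto_nhdsWithin_of_tendsto_nhds tendsto_id)
      (Ioo_mem_nhdsLT one_pos) hA
end
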